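/- arXiv:2009.08860 — 4 statements merged into one kernel-verified Lean document; each statement's English description precedes it below -/
import Mathlib

section
/- Let g be a Riemannian metric on an open set U ⊆ ℝ³ and let X be a smooth vector field on U. Then ∇_g(|X|²_g) = 2 ∇_X X + 2 X ×_g curl_g X on U, where ∇_X X is the covariant derivative of X along itself; equivalently X ×_g curl_g X = ½ ∇_g(|X|²_g) − ∇_X X. -/
noncomputable section

set_option maxHeartbeats 2000000

/-- Points of `ℝ³`. -/
abbrev Pt : Type := Fin 3 → ℝ

/-- Vector fields on `ℝ³`. -/
abbrev VF : Type := Pt → Pt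

/-- A (matrix-valued) metric on `ℝ³`. -/
abbrev Met3 : Type := Pt → Matrix (Fin 3) (Fin 3) ℝ

/-- Partial derivative `∂ᵢ f` in the standard coordinates. -/
def pd (i : Fin 3) (f : Pt → ℝ) (x : Pt) : ℝ := fderiv ℝ f x (Pi.single i 1)

/-- The Levi-Civita symbol `ε_{ijk}`. -/
def eps (i j k : Fin 3) : ℝ :=
  ((j.val : ℝ) - (i.val : ℝ)) * ((k.val : ℝ) - (i.val : ℝ)) * ((k.val : ℝ) - (j.val : ℝ)) / 2

/-- `g` is a smooth Riemannian metric on `U`: smooth coefficients, symmetric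
positive-definite at every point of `U`. -/
def SmoothMetricOn (g : Met3) (U : Set Pt) : Prop :=
  (∀ i j, ContDiffOn ℝ (⊤ : ℕ∞) (fun x => g x i j) U) ∧ (∀ x ∈ U, (g x).PosDef)

/-- `√|g|`, square root of the determinant of the metric. -/
def sdet (g : Met3) (x : Pt) : ℝ := Real.sqrt (g x).det

/-- Metric dot product `X ·_g Y = g_{ij} X^i Y^j`. -/
def gdot (g : Met3) (X Y : VF) (x : Pt) : ℝ := ∑ i, ∑ j, g x i j * X x i * Y x j

/-- `|X|²_g`. -/
def gnormSq (g : Met3) (X : VF) (x : Pt) : ℝ := gdot g X X x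

/-- Metric gradient `(∇_g f)^i = g^{ij} ∂_j f`. -/
def ggrad (g : Met3) (f : Pt → ℝ) : VF := fun x i => ∑ j, (g x)⁻¹ i j * pd j f x

/-- Metric cross product `(X ×_g Y)^k = √|g| g^{kℓ} ε_{ijℓ} X^i Y^j`. -/
def gcross (g : Met3) (X Y : VF) : VF :=
  fun x k => sdet g x * ∑ l, ∑ i, ∑ j, (g x)⁻¹ k l * eps i j l * X x i * Y x j

/-- Metric divergence `div_g X = |g|^{-1/2} ∂_i(√|g| X^i)`. -/
def gdiv (g : Met3) (X : VF) (x : Pt) : ℝ :=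
  (sdet g x)⁻¹ * ∑ i, pd i (fun y => sdet g y * X y i) x

/-- Metric curl `(curl_g X)^m = √|g| g^{mn} g^{ik} g^{jℓ} ε_{kℓn} ∂_i(g_{jp}X^p)`. -/
def gcurl (g : Met3) (X : VF) : VF :=
  fun x m => sdet g x * ∑ n, ∑ i, ∑ k, ∑ j, ∑ l,
    (g x)⁻¹ m n * (g x)⁻¹ i k * (g x)⁻¹ j l * eps k l n *
      pd i (fun y => ∑ p, g y j p * X y p) x

/-- Christoffel symbols `Γ^k_{ij}`. -/
def christoffel (g : Met3) (x : Pt) (k i j : Fin 3) : ℝ :=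
  (1 / 2) * ∑ l, (g x)⁻¹ k l *
    (pd i (fun y => g y j l) x + pd j (fun y => g y i l) x - pd l (fun y => g y i j) x)

/-- Covariant derivative `(∇_X Y)^i = X^j ∂_j Y^i + Γ^i_{jk} X^j Y^k`. -/
def covD (g : Met3) (X Y : VF) : VF :=
  fun x i => (∑ j, X x j * pd j (fun y => Y y i) x)
    + ∑ j, ∑ k, christoffel g x i j k * X x j * Y x k

/-- Lie derivative of a vector field, `(L_X Y)^i = X^j ∂_j Y^i − Y^j ∂_j X^i`. -/
def lieVF (X Y : VF) : VF :=
  fun x i => (∑ j, X x j * pd j (fun y => Y y i) x) - ∑ j, Y x j * pd j (fun y => X y i) x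

/-- Deformation tensor `(L_X g)_{ij} = ∂_i(g_{jℓ}X^ℓ) + ∂_j(g_{iℓ}X^ℓ) − 2Γ^k_{ij} g_{kℓ}X^ℓ`. -/
def lieMet (g : Met3) (X : VF) (x : Pt) (i j : Fin 3) : ℝ :=
  pd i (fun y => ∑ l, g y j l * X y l) x + pd j (fun y => ∑ l, g y i l * X y l) x
    - 2 * ∑ k, ∑ l, christoffel g x k i j * g x k l * X x l

/-- Pairing `(L_X g)(A, B) = (L_X g)_{ij} A^i B^j`. -/
def lieMetPair (g : Met3) (X A B : VF) (x : Pt) : ℝ :=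
  ∑ i, ∑ j, lieMet g X x i j * A x i * B x j

/-- `ξ` is a `g`-Killing field on `U`. -/
def IsKillingOn (g : Met3) (ξ : VF) (U : Set Pt) : Prop :=
  ∀ x ∈ U, ∀ i j, lieMet g ξ x i j = 0

/-- Euclidean dot product. -/
def edot (X Y : VF) (x : Pt) : ℝ := ∑ i, X x i * Y x i

/-- Euclidean gradient. -/
def egrad (f : Pt → ℝ) : VF := fun x i => pd i f x

/-- Euclidean cross product. -/
def ecross (X Y : VF) : VF := fun x k => ∑ i, ∑ j, eps i j k * X x i * Y x j

/-- Euclidean divergence. -/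
def ediv (X : VF) (x : Pt) : ℝ := ∑ i, pd i (fun y => X y i) x

/-- Euclidean curl. -/
def ecurl (X : VF) : VF := fun x m => ∑ i, ∑ j, eps i j m * pd i (fun y => X y j) x

/-- Euclidean deformation tensor pairing `(L_ξ δ)(A,B) = A^i (∂_i ξ^j + ∂_j ξ^i) B^j`. -/
def lieEuclPair (ξ A B : VF) (x : Pt) : ℝ :=
  ∑ i, ∑ j, A x i * (pd i (fun y => ξ y j) x + pd j (fun y => ξ y i) x) * B x j

/-- The magnetic field ansatz `B_g = |ξ|_g^{-2} (C(ψ) ξ + √|g| (ξ ×_g ∇_g ψ))`. -/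
def Bg (g : Met3) (ξ : VF) (C : ℝ → ℝ) (ψ : Pt → ℝ) : VF :=
  fun x i => (gnormSq g ξ x)⁻¹ * (C (ψ x) * ξ x i + sdet g x * gcross g ξ (ggrad g ψ) x i)

section AuxStatement5

lemma pd_congr_on {U : Set Pt} (hU : IsOpen U) {x : Pt} (hx : x ∈ U)
    {f h : Pt → ℝ} (hfh : ∀ y ∈ U, f y = h y) (i : Fin 3) :
    pd i f x = pd i h x := by
  unfold pd
  rw [Filter.EventuallyEq.fderiv_eq (Filter.eventuallyEq_of_mem (hU.mem_nhds hx) hfh)]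

lemma pd_sum_mul {f h : Fin 3 → Pt → ℝ} {x : Pt}
    (hf : ∀ p, DifferentiableAt ℝ (f p) x) (hh : ∀ p, DifferentiableAt ℝ (h p) x) (i : Fin 3) :
    pd i (fun y => ∑ p, f p y * h p y) x
      = ∑ p, (pd i (f p) x * h p x + f p x * pd i (h p) x) := by
  unfold pd
  rw [fderiv_fun_sum (A := fun p y => f p y * h p y) (fun p _ => ((hf p).mul (hh p)))]
  rw [ContinuousLinearMap.sum_apply]
  refine Finset.sum_congr rfl fun p _ => ?_
  rw [fderiv_fun_mul (hf p) (hh p)]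
  simp only [ContinuousLinearMap.add_apply, ContinuousLinearMap.smul_apply, smul_eq_mul]
  ring

lemma pd_sum2_mul3 {a : Fin 3 → Fin 3 → Pt → ℝ} {b c : Fin 3 → Pt → ℝ} {x : Pt}
    (ha : ∀ p q, DifferentiableAt ℝ (a p q) x)
    (hb : ∀ p, DifferentiableAt ℝ (b p) x) (hc : ∀ p, DifferentiableAt ℝ (c p) x) (i : Fin 3) :
    pd i (fun y => ∑ p, ∑ q, a p q y * b p y * c q y) x
      = ∑ p, ∑ q, (pd i (a p q) x * b p x * c q x + a p q x * pd i (b p) x * c q x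
          + a p q x * b p x * pd i (c q) x) := by
  unfold pd
  have hd1 : ∀ p q, DifferentiableAt ℝ (fun y => a p q y * b p y * c q y) x :=
    fun p q => ((ha p q).mul (hb p)).mul (hc q)
  rw [fderiv_fun_sum (fun p _ => DifferentiableAt.fun_sum (fun q _ => hd1 p q))]
  rw [ContinuousLinearMap.sum_apply]
  refine Finset.sum_congr rfl fun p _ => ?_
  rw [fderiv_fun_sum (fun q _ => hd1 p q), ContinuousLinearMap.sum_apply]
  refine Finset.sum_congr rfl fun q _ => ?_
  rw [fderiv_fun_mul (c := fun y => a p q y * b p y) ((ha p q).mul (hb p)) (hc q), fderiv_fun_mul (ha p q) (hb p)]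
  simp only [ContinuousLinearMap.add_apply, ContinuousLinearMap.smul_apply, smul_eq_mul]
  ring

lemma contract3' (G : Matrix (Fin 3) (Fin 3) ℝ) (t : Fin 3 → Fin 3 → ℝ) (m : Fin 3) :
    (∑ n, ∑ i, ∑ k, ∑ j, ∑ l,
        G.adjugate m n * G.adjugate i k * G.adjugate j l * eps k l n * t i j)
      = G.det * G.det * ∑ i, ∑ j, eps i j m * t i j := by
  fin_cases m <;>
  · simp only [Fin.sum_univ_three]
    norm_num [eps, Fin.isValue]
    simp [Matrix.adjugate_fin_three, Matrix.det_fin_three]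
    ring

lemma contract3 (G : Matrix (Fin 3) (Fin 3) ℝ) (hG : G.det ≠ 0)
    (t : Fin 3 → Fin 3 → ℝ) (m : Fin 3) :
    (∑ n, ∑ i, ∑ k, ∑ j, ∑ l, G⁻¹ m n * G⁻¹ i k * G⁻¹ j l * eps k l n * t i j)
      = (G.det)⁻¹ * ∑ i, ∑ j, eps i j m * t i j := by
  have hinv : ∀ a b, G⁻¹ a b = (G.det)⁻¹ * G.adjugate a b := by
    intro a b
    rw [Matrix.inv_def]
    simp [Ring.inverse_eq_inv, Matrix.smul_apply, smul_eq_mul]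
  have step : ∀ n i k j l : Fin 3, G⁻¹ m n * G⁻¹ i k * G⁻¹ j l * eps k l n * t i j
      = (G.det)⁻¹ * ((G.det)⁻¹ * ((G.det)⁻¹ *
          (G.adjugate m n * G.adjugate i k * G.adjugate j l * eps k l n * t i j))) := by
    intro n i k j l
    rw [hinv, hinv, hinv]
    ring
  simp only [step, ← Finset.mul_sum]
  rw [contract3']
  field_simp

lemma curl_eq (g : Met3) (X : VF) (x : Pt) (hpd : (g x).PosDef) (m : Fin 3) :
    gcurl g X x m
      = (sdet g x)⁻¹ * ∑ i, ∑ j, eps i j m * pd i (fun y => ∑ p, g y j p * X y p) x := by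
  have hd : 0 < (g x).det := hpd.det_pos
  have hs : sdet g x * sdet g x = (g x).det := Real.mul_self_sqrt hd.le
  have hsne : sdet g x ≠ 0 := (Real.sqrt_pos.mpr hd).ne'
  have hsinv : (sdet g x)⁻¹ = sdet g x * ((g x).det)⁻¹ := by
    field_simp
    linarith [hs]
  unfold gcurl
  rw [contract3 (g x) hd.ne' (fun i j => pd i (fun y => ∑ p, g y j p * X y p) x) m,
    hsinv, mul_assoc]

lemma crosscon (G : Matrix (Fin 3) (Fin 3) ℝ) (s : ℝ) (hsne : s ≠ 0)
    (v : Fin 3 → ℝ) (t : Fin 3 → Fin 3 → ℝ) (k : Fin 3) :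
    s * ∑ l, ∑ i, ∑ j, G⁻¹ k l * eps i j l * v i * (s⁻¹ * ∑ a, ∑ b, eps a b j * t a b)
      = ∑ l, G⁻¹ k l * ((∑ j, v j * t l j) - ∑ i, v i * t i l) := by
  simp only [Fin.sum_univ_three]
  norm_num [eps, Fin.isValue]
  field_simp
  ring

lemma cross_curl_eq (g : Met3) (X : VF) (x : Pt) (hpd : (g x).PosDef) (k : Fin 3) :
    gcross g X (gcurl g X) x k
      = ∑ l, (g x)⁻¹ k l *
          ((∑ j, X x j * pd l (fun y => ∑ p, g y j p * X y p) x)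
            - ∑ i, X x i * pd i (fun y => ∑ p, g y l p * X y p) x) := by
  have hd : 0 < (g x).det := hpd.det_pos
  have hsne : sdet g x ≠ 0 := (Real.sqrt_pos.mpr hd).ne'
  unfold gcross
  simp only [curl_eq g X x hpd]
  exact crosscon (g x) (sdet g x) hsne (X x)
    (fun a b => pd a (fun y => ∑ p, g y b p * X y p) x) k

end AuxStatement5

/-- `∇_g |X|²_g = 2 ∇_X X + 2 X ×_g curl_g X`. -/
theorem statement5 (U : Set Pt) (hU : IsOpen U)
    (g : Met3) (hg : SmoothMetricOn g U)
    (X : VF) (hX : ContDiffOn ℝ (⊤ : ℕ∞) X U) :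
    ∀ x ∈ U, ∀ i,
      ggrad g (gnormSq g X) x i
          = 2 * covD g X X x i + 2 * gcross g X (gcurl g X) x i ∧
      gcross g X (gcurl g X) x i
          = (1 / 2) * ggrad g (gnormSq g X) x i - covD g X X x i := by
  intro x hx c
  have hpd : (g x).PosDef := hg.2 x hx
  have hd : 0 < (g x).det := hpd.det_pos
  have hdg : ∀ a b, DifferentiableAt ℝ (fun y => g y a b) x := fun a b =>
    ((hg.1 a b).contDiffAt (hU.mem_nhds hx)).differentiableAt (by simp)
  have hdX : ∀ p, DifferentiableAt ℝ (fun y => X y p) x := fun p =>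
    ((contDiffAt_pi.mp (hX.contDiffAt (hU.mem_nhds hx))) p).differentiableAt (by simp)
  have hsymU : ∀ y ∈ U, ∀ a b, g y a b = g y b a := by
    intro y hy a b
    have h := (hg.2 y hy).1
    conv_lhs => rw [← h]
    simp [Matrix.conjTranspose_apply]
  have hT : ∀ l j, pd l (fun y => ∑ p, g y j p * X y p) x
      = ∑ p, (pd l (fun y => g y j p) x * X x p + g x j p * pd l (fun y => X y p) x) :=
    fun l j => pd_sum_mul (f := fun p y => g y j p) (h := fun p y => X y p)
      (fun p => hdg j p) hdX l
  have hQ : ∀ l, pd l (gnormSq g X) x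
      = ∑ p, ∑ q, (pd l (fun y => g y p q) x * X x p * X x q
          + g x p q * pd l (fun y => X y p) x * X x q
          + g x p q * X x p * pd l (fun y => X y q) x) :=
    fun l => pd_sum2_mul3 (a := fun p q y => g y p q) (b := fun p y => X y p)
      (c := fun q y => X y q) (fun p q => hdg p q) hdX hdX l
  have hsym : ∀ a b, g x a b = g x b a := hsymU x hx
  have hpdsym : ∀ l a b, pd l (fun y => g y a b) x = pd l (fun y => g y b a) x :=
    fun l a b => pd_congr_on hU hx (fun y hy => hsymU y hy a b) l
  have hinv : ∀ a b, (g x)⁻¹ a b = ((g x).det)⁻¹ * (g x).adjugate a b := by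
    intro a b
    rw [Matrix.inv_def]
    simp [Ring.inverse_eq_inv, Matrix.smul_apply, smul_eq_mul]
  have key : gcross g X (gcurl g X) x c
      = (1 / 2) * ggrad g (gnormSq g X) x c - covD g X X x c := by
    rw [cross_curl_eq g X x hpd]
    simp only [ggrad, covD, christoffel, hQ, hT]
    fin_cases c <;>
    · simp only [Fin.sum_univ_three, hinv]
      field_simp
      simp [Matrix.adjugate_fin_three, Matrix.det_fin_three]
      simp only [hsym 1 0, hsym 2 0, hsym 2 1, hpdsym 0 1 0, hpdsym 0 2 0, hpdsym 0 2 1,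
        hpdsym 1 1 0, hpdsym 1 2 0, hpdsym 1 2 1, hpdsym 2 1 0, hpdsym 2 2 0, hpdsym 2 2 1]
      ring
  exact ⟨by linarith [key], key⟩
end
end

section
/- Let g be a Riemannian metric on an open set U ⊆ ℝ³ and let ξ be a smooth vector field on U that is a g-Killing field, i.e. (L_ξ g)_{ij} = 0 on U. Then for all smooth vector fields X, Y on U, the Lie derivative along ξ satisfies the Leibniz rule for the g-cross product: L_ξ(X ×_g Y) = (L_ξ X) ×_g Y + X ×_g (L_ξ Y) on U. -/
noncomputable section

set_option maxHeartbeats 1000000 in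
open Filter in
lemma pd_congr_nhds {f h : Pt → ℝ} {x : Pt} (hfh : f =ᶠ[nhds x] h) (i : Fin 3) :
    pd i f x = pd i h x := by unfold pd; rw [hfh.fderiv_eq]

lemma pd_add {f h : Pt → ℝ} {x : Pt} (hf : DifferentiableAt ℝ f x)
    (hh : DifferentiableAt ℝ h x) (i : Fin 3) :
    pd i (fun y => f y + h y) x = pd i f x + pd i h x := by
  unfold pd; rw [fderiv_fun_add hf hh]; simp

lemma pd_mul {f h : Pt → ℝ} {x : Pt} (hf : DifferentiableAt ℝ f x)
    (hh : DifferentiableAt ℝ h x) (i : Fin 3) :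
    pd i (fun y => f y * h y) x = pd i f x * h x + f x * pd i h x := by
  unfold pd; rw [fderiv_fun_mul hf hh]; simp; ring

lemma pd_sum {n : ℕ} {f : Fin n → Pt → ℝ} {x : Pt}
    (hf : ∀ j, DifferentiableAt ℝ (f j) x) (i : Fin 3) :
    pd i (fun y => ∑ j, f j y) x = ∑ j, pd i (f j) x := by
  unfold pd; rw [fderiv_fun_sum (fun j _ => hf j)]; simp

lemma pd_const_mul {f : Pt → ℝ} {x : Pt} (c : ℝ) (hf : DifferentiableAt ℝ f x) (i : Fin 3) :
    pd i (fun y => c * f y) x = c * pd i f x := by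
  unfold pd; rw [fderiv_const_mul hf]; simp

lemma pd_sub {f h : Pt → ℝ} {x : Pt} (hf : DifferentiableAt ℝ f x)
    (hh : DifferentiableAt ℝ h x) (i : Fin 3) :
    pd i (fun y => f y - h y) x = pd i f x - pd i h x := by
  unfold pd; rw [fderiv_fun_sub hf hh]; simp

lemma pd_mul3 {f h w : Pt → ℝ} {x : Pt} (hf : DifferentiableAt ℝ f x)
    (hh : DifferentiableAt ℝ h x) (hw : DifferentiableAt ℝ w x) (i : Fin 3) :
    pd i (fun y => f y * h y * w y) x
      = pd i f x * h x * w x + f x * pd i h x * w x + f x * h x * pd i w x := by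
  rw [pd_mul (f := fun y => f y * h y) (hf.mul hh) hw, pd_mul hf hh]; ring
lemma eps000 : eps 0 0 0 = 0 := by norm_num [eps]
lemma eps001 : eps 0 0 1 = 0 := by norm_num [eps]
lemma eps002 : eps 0 0 2 = 0 := by norm_num [eps]
lemma eps010 : eps 0 1 0 = 0 := by norm_num [eps]
lemma eps011 : eps 0 1 1 = 0 := by norm_num [eps]
lemma eps012 : eps 0 1 2 = 1 := by norm_num [eps]
lemma eps020 : eps 0 2 0 = 0 := by norm_num [eps]
lemma eps021 : eps 0 2 1 = -1 := by norm_num [eps]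
lemma eps022 : eps 0 2 2 = 0 := by norm_num [eps]
lemma eps100 : eps 1 0 0 = 0 := by norm_num [eps]
lemma eps101 : eps 1 0 1 = 0 := by norm_num [eps]
lemma eps102 : eps 1 0 2 = -1 := by norm_num [eps]
lemma eps110 : eps 1 1 0 = 0 := by norm_num [eps]
lemma eps111 : eps 1 1 1 = 0 := by norm_num [eps]
lemma eps112 : eps 1 1 2 = 0 := by norm_num [eps]
lemma eps120 : eps 1 2 0 = 1 := by norm_num [eps]
lemma eps121 : eps 1 2 1 = 0 := by norm_num [eps]
lemma eps122 : eps 1 2 2 = 0 := by norm_num [eps]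
lemma eps200 : eps 2 0 0 = 0 := by norm_num [eps]
lemma eps201 : eps 2 0 1 = 1 := by norm_num [eps]
lemma eps202 : eps 2 0 2 = 0 := by norm_num [eps]
lemma eps210 : eps 2 1 0 = -1 := by norm_num [eps]
lemma eps211 : eps 2 1 1 = 0 := by norm_num [eps]
lemma eps212 : eps 2 1 2 = 0 := by norm_num [eps]
lemma eps220 : eps 2 2 0 = 0 := by norm_num [eps]
lemma eps221 : eps 2 2 1 = 0 := by norm_num [eps]
lemma eps222 : eps 2 2 2 = 0 := by norm_num [eps]
set_option maxHeartbeats 4000000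

/-- Killing fields satisfy a Leibniz rule for the `g`-cross product. -/
theorem statement10 (U : Set Pt) (hU : IsOpen U)
    (g : Met3) (hg : SmoothMetricOn g U)
    (ξ : VF) (hξ : ContDiffOn ℝ (⊤ : ℕ∞) ξ U) (hKill : IsKillingOn g ξ U)
    (X Y : VF) (hX : ContDiffOn ℝ (⊤ : ℕ∞) X U) (hY : ContDiffOn ℝ (⊤ : ℕ∞) Y U) :
    ∀ x ∈ U, ∀ i,
      lieVF ξ (gcross g X Y) x i
        = gcross g (lieVF ξ X) Y x i + gcross g X (lieVF ξ Y) x i := by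
  intro x hx
  have hUx : U ∈ nhds x := hU.mem_nhds hx
  -- differentiability of metric entries
  have hgd : ∀ i j, DifferentiableAt ℝ (fun y => g y i j) x := fun i j =>
    ((hg.1 i j).contDiffAt hUx).differentiableAt (by simp)
  -- differentiability of vector field components
  have hcomp : ∀ (Z : VF), ContDiffOn ℝ (⊤ : ℕ∞) Z U → ∀ i, DifferentiableAt ℝ (fun y => Z y i) x :=
    fun Z hZ i => (differentiableAt_pi.mp ((hZ.contDiffAt hUx).differentiableAt (by simp))) i
  have hξd := hcomp ξ hξ
  have hXd := hcomp X hX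
  have hYd := hcomp Y hY
  -- positivity facts
  have hpos : ∀ y ∈ U, ((g y).det) > 0 := fun y hy => (hg.2 y hy).det_pos
  have hdet0 : (g x).det ≠ 0 := (hpos x hx).ne'
  have hunit : IsUnit (g x).det := isUnit_iff_ne_zero.mpr hdet0
  have hSpos : 0 < sdet g x := Real.sqrt_pos.mpr (hpos x hx)
  have hS0 : sdet g x ≠ 0 := hSpos.ne'
  -- symmetry
  have hGsym : ∀ y ∈ U, (g y).transpose = g y := fun y hy => by
    have h := (hg.2 y hy).1
    rw [Matrix.IsHermitian] at h
    rwa [Matrix.conjTranspose_eq_transpose_of_trivial] at h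
  have hAsym : ((g x)⁻¹).transpose = (g x)⁻¹ := by
    rw [Matrix.transpose_nonsing_inv, hGsym x hx]
  -- determinant as explicit polynomial
  have hdetfun : (fun y => (g y).det)
      = fun y => g y 0 0 * g y 1 1 * g y 2 2 - g y 0 0 * g y 1 2 * g y 2 1
          - g y 0 1 * g y 1 0 * g y 2 2 + g y 0 1 * g y 1 2 * g y 2 0
          + g y 0 2 * g y 1 0 * g y 2 1 - g y 0 2 * g y 1 1 * g y 2 0 :=
    funext fun y => Matrix.det_fin_three (g y)
  have hdetd : DifferentiableAt ℝ (fun y => (g y).det) x := by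
    rw [hdetfun]
    have h00 := hgd 0 0; have h01 := hgd 0 1; have h02 := hgd 0 2
    have h10 := hgd 1 0; have h11 := hgd 1 1; have h12 := hgd 1 2
    have h20 := hgd 2 0; have h21 := hgd 2 1; have h22 := hgd 2 2
    fun_prop
  have hsdet_eq : sdet g = fun y => Real.sqrt ((fun z => (g z).det) y) := rfl
  have hsdd : DifferentiableAt ℝ (sdet g) x := by
    rw [hsdet_eq]
    exact (hdetd.hasFDerivAt.sqrt hdet0).differentiableAt
  -- derivative of sdet
  have hpdS : ∀ a, pd a (sdet g) x = 1 / (2 * sdet g x) * pd a (fun y => (g y).det) x := by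
    intro a
    have h1 := (hdetd.hasFDerivAt.sqrt hdet0).fderiv
    have : pd a (sdet g) x = (fderiv ℝ (fun y => Real.sqrt ((g y).det)) x) (Pi.single a 1) := rfl
    rw [this, h1]
    simp [pd, sdet]
  -- inverse entries are differentiable
  have hadjd : ∀ k l, DifferentiableAt ℝ (fun y => (g y).adjugate k l) x := by
    have h00 := hgd 0 0; have h01 := hgd 0 1; have h02 := hgd 0 2
    have h10 := hgd 1 0; have h11 := hgd 1 1; have h12 := hgd 1 2
    have h20 := hgd 2 0; have h21 := hgd 2 1; have h22 := hgd 2 2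
    intro k l
    fin_cases k <;> fin_cases l <;>
      simp only [Matrix.adjugate_fin_three, Matrix.of_apply, Matrix.cons_val_zero,
        Matrix.cons_val_one, Matrix.cons_val_two, Matrix.head_cons, Matrix.vecHead,
        Matrix.vecTail, Fin.succ_zero_eq_one, Fin.succ_one_eq_two, Matrix.cons_val_succ,
        Fin.zero_eta, Fin.mk_one, Fin.reduceFinMk, Function.comp] <;>
      fun_prop
  have hinvd : ∀ k l, DifferentiableAt ℝ (fun y => (g y)⁻¹ k l) x := by
    intro k l
    have heq : (fun y => (g y)⁻¹ k l) = fun y => ((g y).det)⁻¹ * (g y).adjugate k l := by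
      funext y
      rw [Matrix.inv_def, Matrix.smul_apply, Ring.inverse_eq_inv', smul_eq_mul]
    rw [heq]
    exact (hdetd.inv hdet0).mul (hadjd k l)
  -- ecross components differentiable
  have hecd : ∀ (Z W : VF), (∀ i, DifferentiableAt ℝ (fun y => Z y i) x) →
      (∀ i, DifferentiableAt ℝ (fun y => W y i) x) →
      ∀ l, DifferentiableAt ℝ (fun y => ecross Z W y l) x := by
    intro Z W hZ hW l
    have : (fun y => ecross Z W y l)
        = fun y => ∑ i, ∑ j, eps i j l * Z y i * W y j := rfl
    rw [this]
    exact DifferentiableAt.fun_sum fun i _ => DifferentiableAt.fun_sum fun j _ =>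
      ((differentiableAt_const _).mul (hZ i)).mul (hW j)
  -- gcross rewritten
  have hWdef : ∀ (Z W : VF) (y : Pt) (c : Fin 3),
      gcross g Z W y c = sdet g y * ∑ l, (g y)⁻¹ c l * ecross Z W y l := by
    intro Z W y c
    simp only [gcross, ecross, Fin.sum_univ_three]
    ring
  -- gcross components differentiable
  have hWd : ∀ c, DifferentiableAt ℝ (fun y => gcross g X Y y c) x := by
    intro c
    have : (fun y => gcross g X Y y c)
        = fun y => sdet g y * ∑ l, (g y)⁻¹ c l * ecross X Y y l :=
      funext fun y => hWdef X Y y c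
    rw [this]
    exact hsdd.mul (DifferentiableAt.fun_sum fun l _ => (hinvd c l).mul (hecd X Y hXd hYd l))
  -- lowering the cross product
  have hLC : ∀ (Z W : VF) (y : Pt), y ∈ U → ∀ m,
      ∑ c, g y m c * gcross g Z W y c = sdet g y * ecross Z W y m := by
    intro Z W y hy m
    have hw : ∀ c, gcross g Z W y c
        = sdet g y * ((g y)⁻¹.mulVec (fun l => ecross Z W y l)) c := by
      intro c
      rw [hWdef]
      simp only [Matrix.mulVec, dotProduct]
    calc ∑ c, g y m c * gcross g Z W y c
        = sdet g y * ((g y).mulVec ((g y)⁻¹.mulVec (fun l => ecross Z W y l))) m := by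
          simp only [hw, Matrix.mulVec, dotProduct, Fin.sum_univ_three]
          ring
      _ = sdet g y * ecross Z W y m := by
          rw [Matrix.mulVec_mulVec,
            Matrix.mul_nonsing_inv _ (isUnit_iff_ne_zero.mpr (hpos y hy).ne'),
            Matrix.one_mulVec]

  -- symmetry of entries
  have hg10 : g x 1 0 = g x 0 1 := by
    have h := congrFun (congrFun (hGsym x hx) 0) 1
    simpa [Matrix.transpose_apply] using h
  have hg20 : g x 2 0 = g x 0 2 := by
    have h := congrFun (congrFun (hGsym x hx) 0) 2
    simpa [Matrix.transpose_apply] using h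
  have hg21 : g x 2 1 = g x 1 2 := by
    have h := congrFun (congrFun (hGsym x hx) 1) 2
    simpa [Matrix.transpose_apply] using h
  have hA10 : (g x)⁻¹ 1 0 = (g x)⁻¹ 0 1 := by
    have h := congrFun (congrFun hAsym 0) 1
    simpa [Matrix.transpose_apply] using h
  have hA20 : (g x)⁻¹ 2 0 = (g x)⁻¹ 0 2 := by
    have h := congrFun (congrFun hAsym 0) 2
    simpa [Matrix.transpose_apply] using h
  have hA21 : (g x)⁻¹ 2 1 = (g x)⁻¹ 1 2 := by
    have h := congrFun (congrFun hAsym 1) 2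
    simpa [Matrix.transpose_apply] using h
  -- symmetry of metric derivatives
  have hDsym : ∀ (a i j : Fin 3), pd a (fun y => g y i j) x = pd a (fun y => g y j i) x := by
    intro a i j
    apply pd_congr_nhds
    filter_upwards [hUx] with y hy
    have h := congrFun (congrFun (hGsym y hy) j) i
    simpa [Matrix.transpose_apply] using h
  have hD10 : ∀ a, pd a (fun y => g y 1 0) x = pd a (fun y => g y 0 1) x := fun a => hDsym a 1 0
  have hD20 : ∀ a, pd a (fun y => g y 2 0) x = pd a (fun y => g y 0 2) x := fun a => hDsym a 2 0
  have hD21 : ∀ a, pd a (fun y => g y 2 1) x = pd a (fun y => g y 1 2) x := fun a => hDsym a 2 1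
  -- inverse relations
  have hGAm : g x * (g x)⁻¹ = 1 := Matrix.mul_nonsing_inv _ hunit
  have hAGm : (g x)⁻¹ * g x = 1 := Matrix.nonsing_inv_mul _ hunit
  have hAG00 : (g x)⁻¹ 0 0 * g x 0 0 + (g x)⁻¹ 0 1 * g x 1 0 + (g x)⁻¹ 0 2 * g x 2 0 = 1 := by
    have h := congrFun (congrFun hAGm 0) 0
    simpa [Matrix.mul_apply, Fin.sum_univ_three, Matrix.one_apply, hA10, hA20, hA21] using h
  have hAG01 : (g x)⁻¹ 0 0 * g x 0 1 + (g x)⁻¹ 0 1 * g x 1 1 + (g x)⁻¹ 0 2 * g x 2 1 = 0 := by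
    have h := congrFun (congrFun hAGm 0) 1
    simpa [Matrix.mul_apply, Fin.sum_univ_three, Matrix.one_apply, hA10, hA20, hA21] using h
  have hAG02 : (g x)⁻¹ 0 0 * g x 0 2 + (g x)⁻¹ 0 1 * g x 1 2 + (g x)⁻¹ 0 2 * g x 2 2 = 0 := by
    have h := congrFun (congrFun hAGm 0) 2
    simpa [Matrix.mul_apply, Fin.sum_univ_three, Matrix.one_apply, hA10, hA20, hA21] using h
  have hAG10 : (g x)⁻¹ 0 1 * g x 0 0 + (g x)⁻¹ 1 1 * g x 1 0 + (g x)⁻¹ 1 2 * g x 2 0 = 0 := by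
    have h := congrFun (congrFun hAGm 1) 0
    simpa [Matrix.mul_apply, Fin.sum_univ_three, Matrix.one_apply, hA10, hA20, hA21] using h
  have hAG11 : (g x)⁻¹ 0 1 * g x 0 1 + (g x)⁻¹ 1 1 * g x 1 1 + (g x)⁻¹ 1 2 * g x 2 1 = 1 := by
    have h := congrFun (congrFun hAGm 1) 1
    simpa [Matrix.mul_apply, Fin.sum_univ_three, Matrix.one_apply, hA10, hA20, hA21] using h
  have hAG12 : (g x)⁻¹ 0 1 * g x 0 2 + (g x)⁻¹ 1 1 * g x 1 2 + (g x)⁻¹ 1 2 * g x 2 2 = 0 := by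
    have h := congrFun (congrFun hAGm 1) 2
    simpa [Matrix.mul_apply, Fin.sum_univ_three, Matrix.one_apply, hA10, hA20, hA21] using h
  have hAG20 : (g x)⁻¹ 0 2 * g x 0 0 + (g x)⁻¹ 1 2 * g x 1 0 + (g x)⁻¹ 2 2 * g x 2 0 = 0 := by
    have h := congrFun (congrFun hAGm 2) 0
    simpa [Matrix.mul_apply, Fin.sum_univ_three, Matrix.one_apply, hA10, hA20, hA21] using h
  have hAG21 : (g x)⁻¹ 0 2 * g x 0 1 + (g x)⁻¹ 1 2 * g x 1 1 + (g x)⁻¹ 2 2 * g x 2 1 = 0 := by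
    have h := congrFun (congrFun hAGm 2) 1
    simpa [Matrix.mul_apply, Fin.sum_univ_three, Matrix.one_apply, hA10, hA20, hA21] using h
  have hAG22 : (g x)⁻¹ 0 2 * g x 0 2 + (g x)⁻¹ 1 2 * g x 1 2 + (g x)⁻¹ 2 2 * g x 2 2 = 1 := by
    have h := congrFun (congrFun hAGm 2) 2
    simpa [Matrix.mul_apply, Fin.sum_univ_three, Matrix.one_apply, hA10, hA20, hA21] using h
  -- derivative of the metric contraction
  have hpdcontr : ∀ (i j : Fin 3), pd i (fun y => ∑ l, g y j l * ξ y l) x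
      = ∑ l, (pd i (fun y => g y j l) x * ξ x l + g x j l * pd i (fun y => ξ y l) x) := by
    intro i j
    rw [pd_sum (fun l => (hgd j l).fun_mul (hξd l)) i]
    exact Finset.sum_congr rfl fun l _ => pd_mul (hgd j l) (hξd l) i
  -- expanded Killing equations
  have hK2 : ∀ (i j : Fin 3),
      (∑ a, ξ x a * pd a (fun y => g y i j) x)
        + ((∑ l, g x j l * pd i (fun y => ξ y l) x)
          + (∑ l, g x i l * pd j (fun y => ξ y l) x)) = 0 := by
    intro i j
    have hk := hKill x hx i j
    unfold lieMet christoffel at hk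
    rw [hpdcontr i j, hpdcontr j i] at hk
    simp only [Fin.sum_univ_three, hA10, hA20, hA21] at hk
    simp only [Fin.sum_univ_three]
    linear_combination hk
      + ((pd i (fun y => g y j 0) x + pd j (fun y => g y i 0) x - pd 0 (fun y => g y i j) x) * ξ x 0) * hAG00
      + ((pd i (fun y => g y j 0) x + pd j (fun y => g y i 0) x - pd 0 (fun y => g y i j) x) * ξ x 1) * hAG01
      + ((pd i (fun y => g y j 0) x + pd j (fun y => g y i 0) x - pd 0 (fun y => g y i j) x) * ξ x 2) * hAG02
      + ((pd i (fun y => g y j 1) x + pd j (fun y => g y i 1) x - pd 1 (fun y => g y i j) x) * ξ x 0) * hAG10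
      + ((pd i (fun y => g y j 1) x + pd j (fun y => g y i 1) x - pd 1 (fun y => g y i j) x) * ξ x 1) * hAG11
      + ((pd i (fun y => g y j 1) x + pd j (fun y => g y i 1) x - pd 1 (fun y => g y i j) x) * ξ x 2) * hAG12
      + ((pd i (fun y => g y j 2) x + pd j (fun y => g y i 2) x - pd 2 (fun y => g y i j) x) * ξ x 0) * hAG20
      + ((pd i (fun y => g y j 2) x + pd j (fun y => g y i 2) x - pd 2 (fun y => g y i j) x) * ξ x 1) * hAG21
      + ((pd i (fun y => g y j 2) x + pd j (fun y => g y i 2) x - pd 2 (fun y => g y i j) x) * ξ x 2) * hAG22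
  -- explicit derivative of the determinant
  have d3 : ∀ (i1 j1 i2 j2 i3 j3 : Fin 3),
      DifferentiableAt ℝ (fun y => g y i1 j1 * g y i2 j2 * g y i3 j3) x :=
    fun a b c d e f => ((hgd a b).mul (hgd c d)).mul (hgd e f)
  have hpdet : ∀ a, pd a (fun y => (g y).det) x
      = pd a (fun y => g y 0 0) x * g x 1 1 * g x 2 2 + g x 0 0 * pd a (fun y => g y 1 1) x * g x 2 2 + g x 0 0 * g x 1 1 * pd a (fun y => g y 2 2) x - pd a (fun y => g y 0 0) x * g x 1 2 * g x 1 2 - g x 0 0 * pd a (fun y => g y 1 2) x * g x 1 2 - g x 0 0 * g x 1 2 * pd a (fun y => g y 1 2) x - pd a (fun y => g y 0 1) x * g x 0 1 * g x 2 2 - g x 0 1 * pd a (fun y => g y 0 1) x * g x 2 2 - g x 0 1 * g x 0 1 * pd a (fun y => g y 2 2) x + pd a (fun y => g y 0 1) x * g x 1 2 * g x 0 2 + g x 0 1 * pd a (fun y => g y 1 2) x * g x 0 2 + g x 0 1 * g x 1 2 * pd a (fun y => g y 0 2) x + pd a (fun y => g y 0 2) x * g x 0 1 * g x 1 2 + g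 x 0 2 * pd a (fun y => g y 0 1) x * g x 1 2 + g x 0 2 * g x 0 1 * pd a (fun y => g y 1 2) x - pd a (fun y => g y 0 2) x * g x 1 1 * g x 0 2 - g x 0 2 * pd a (fun y => g y 1 1) x * g x 0 2 - g x 0 2 * g x 1 1 * pd a (fun y => g y 0 2) x := by
    intro a
    have D1 := d3 0 0 1 1 2 2; have D2 := d3 0 0 1 2 2 1; have D3 := d3 0 1 1 0 2 2
    have D4 := d3 0 1 1 2 2 0; have D5 := d3 0 2 1 0 2 1; have D6 := d3 0 2 1 1 2 0
    rw [hdetfun]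
    rw [pd_sub ((((D1.fun_sub D2).fun_sub D3).fun_add D4).fun_add D5) D6 a,
        pd_add (((D1.fun_sub D2).fun_sub D3).fun_add D4) D5 a,
        pd_add ((D1.fun_sub D2).fun_sub D3) D4 a,
        pd_sub (D1.fun_sub D2) D3 a,
        pd_sub D1 D2 a,
        pd_mul3 (hgd 0 0) (hgd 1 1) (hgd 2 2) a,
        pd_mul3 (hgd 0 0) (hgd 1 2) (hgd 2 1) a,
        pd_mul3 (hgd 0 1) (hgd 1 0) (hgd 2 2) a,
        pd_mul3 (hgd 0 1) (hgd 1 2) (hgd 2 0) a,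
        pd_mul3 (hgd 0 2) (hgd 1 0) (hgd 2 1) a,
        pd_mul3 (hgd 0 2) (hgd 1 1) (hgd 2 0) a]
    simp only [hg10, hg20, hg21, hD10, hD20, hD21]
    ring
  -- the key divergence identity
  have key : (ξ x 0 * pd 0 (fun y => (g y).det) x + ξ x 1 * pd 1 (fun y => (g y).det) x
        + ξ x 2 * pd 2 (fun y => (g y).det) x)
      + 2 * (g x 0 0 * (g x 1 1 * g x 2 2 - g x 1 2 * g x 1 2) - g x 0 1 * (g x 0 1 * g x 2 2 - g x 0 2 * g x 1 2) + g x 0 2 * (g x 0 1 * g x 1 2 - g x 0 2 * g x 1 1)) * (pd 0 (fun y => ξ y 0) x + pd 1 (fun y => ξ y 1) x + pd 2 (fun y => ξ y 2) x) = 0 := by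
    have hk00 := hK2 0 0
    simp only [hg10, hg20, hg21, hD10, hD20, hD21, Fin.sum_univ_three] at hk00
    have hk01 := hK2 0 1
    simp only [hg10, hg20, hg21, hD10, hD20, hD21, Fin.sum_univ_three] at hk01
    have hk02 := hK2 0 2
    simp only [hg10, hg20, hg21, hD10, hD20, hD21, Fin.sum_univ_three] at hk02
    have hk10 := hK2 1 0
    simp only [hg10, hg20, hg21, hD10, hD20, hD21, Fin.sum_univ_three] at hk10
    have hk11 := hK2 1 1
    simp only [hg10, hg20, hg21, hD10, hD20, hD21, Fin.sum_univ_three] at hk11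
    have hk12 := hK2 1 2
    simp only [hg10, hg20, hg21, hD10, hD20, hD21, Fin.sum_univ_three] at hk12
    have hk20 := hK2 2 0
    simp only [hg10, hg20, hg21, hD10, hD20, hD21, Fin.sum_univ_three] at hk20
    have hk21 := hK2 2 1
    simp only [hg10, hg20, hg21, hD10, hD20, hD21, Fin.sum_univ_three] at hk21
    have hk22 := hK2 2 2
    simp only [hg10, hg20, hg21, hD10, hD20, hD21, Fin.sum_univ_three] at hk22
    rw [hpdet 0, hpdet 1, hpdet 2]
    linear_combination (g x 1 1 * g x 2 2 - g x 1 2 * g x 1 2) * hk00 + (g x 0 2 * g x 1 2 - g x 0 1 * g x 2 2) * hk01 + (g x 0 1 * g x 1 2 - g x 0 2 * g x 1 1) * hk02 + (g x 0 2 * g x 1 2 - g x 0 1 * g x 2 2) * hk10 + (g x 0 0 * g x 2 2 - g x 0 2 * g x 0 2) * hk11 + (g x 0 1 * g x 0 2 - g x 0 0 * g x 1 2) * hk12 + (g x 0 1 * g x 1 2 - g x 0 2 * g x 1 1) * hk20 + (g x 0 1 * g x 0 2 - g x 0 0 * g x 1 2) * hk21 + (g x 0 0 * g x 1 1 - g x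 0 1 * g x 0 1) * hk22
  have hpdS2 : ∀ a, 2 * sdet g x * pd a (sdet g) x = pd a (fun y => (g y).det) x := by
    intro a
    rw [hpdS a]
    field_simp
  have hs2 : sdet g x * sdet g x = (g x 0 0 * (g x 1 1 * g x 2 2 - g x 1 2 * g x 1 2) - g x 0 1 * (g x 0 1 * g x 2 2 - g x 0 2 * g x 1 2) + g x 0 2 * (g x 0 1 * g x 1 2 - g x 0 2 * g x 1 1)) := by
    have h : sdet g x * sdet g x = (g x).det := Real.mul_self_sqrt (hpos x hx).le
    rw [Matrix.det_fin_three] at h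
    simp only [hg10, hg20, hg21] at h
    linear_combination h
  have hdiv : (∑ a, ξ x a * pd a (sdet g) x)
      + sdet g x * (∑ a, pd a (fun y => ξ y a) x) = 0 := by
    have h2s : (2:ℝ) * sdet g x ≠ 0 := mul_ne_zero two_ne_zero hS0
    apply mul_left_cancel₀ h2s
    simp only [Fin.sum_univ_three, mul_zero]
    linear_combination ξ x 0 * hpdS2 0 + ξ x 1 * hpdS2 1 + ξ x 2 * hpdS2 2
      + key
      + 2 * (pd 0 (fun y => ξ y 0) x + pd 1 (fun y => ξ y 1) x + pd 2 (fun y => ξ y 2) x) * hs2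
  -- derivative of the euclidean cross product components
  have hpdE : ∀ (a m : Fin 3), pd a (fun y => ecross X Y y m) x
      = ∑ i, ∑ j, eps i j m * (pd a (fun y => X y i) x * Y x j + X x i * pd a (fun y => Y y j) x) := by
    intro a m
    have h0 : pd a (fun y => ecross X Y y m) x
        = pd a (fun y => ∑ i, ∑ j, eps i j m * X y i * Y y j) x := rfl
    rw [h0, pd_sum (fun i => DifferentiableAt.fun_sum fun j _ =>
      ((differentiableAt_const _).fun_mul (hXd i)).fun_mul (hYd j)) a]
    refine Finset.sum_congr rfl fun i _ => ?_
    rw [pd_sum (fun j => ((differentiableAt_const _).fun_mul (hXd i)).fun_mul (hYd j)) a]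
    refine Finset.sum_congr rfl fun j _ => ?_
    rw [pd_mul ((differentiableAt_const _).fun_mul (hXd i)) (hYd j) a,
        pd_const_mul (eps i j m) (hXd i) a]
    ring
  -- the central analytic identity
  have hH1 : ∀ (a m : Fin 3),
      (∑ c, (pd a (fun y => g y m c) x * gcross g X Y x c
        + g x m c * pd a (fun y => gcross g X Y y c) x))
      = pd a (sdet g) x * ecross X Y x m + sdet g x * pd a (fun y => ecross X Y y m) x := by
    intro a m
    have hL : pd a (fun y => ∑ c, g y m c * gcross g X Y y c) x
        = ∑ c, (pd a (fun y => g y m c) x * gcross g X Y x c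
            + g x m c * pd a (fun y => gcross g X Y y c) x) := by
      rw [pd_sum (fun c => (hgd m c).fun_mul (hWd c)) a]
      exact Finset.sum_congr rfl fun c _ => pd_mul (hgd m c) (hWd c) a
    have hR : pd a (fun y => sdet g y * ecross X Y y m) x
        = pd a (sdet g) x * ecross X Y x m + sdet g x * pd a (fun y => ecross X Y y m) x :=
      pd_mul hsdd (hecd X Y hXd hYd m) a
    have hC : pd a (fun y => ∑ c, g y m c * gcross g X Y y c) x
        = pd a (fun y => sdet g y * ecross X Y y m) x := by
      apply pd_congr_nhds
      filter_upwards [hUx] with y hy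
      exact hLC X Y y hy m
    rw [← hL, hC, hR]
  -- expanded instances
  have hdiv' := hdiv
  simp only [Fin.sum_univ_three] at hdiv'
  have eL0 := hLC X Y x hx 0
  simp only [ecross, Fin.sum_univ_three, eps000, eps001, eps002, eps010, eps011, eps012, eps020, eps021, eps022, eps100, eps101, eps102, eps110, eps111, eps112, eps120, eps121, eps122, eps200, eps201, eps202, eps210, eps211, eps212, eps220, eps221, eps222, hg10, hg20, hg21] at eL0
  norm_num at eL0
  have eL1 := hLC X Y x hx 1
  simp only [ecross, Fin.sum_univ_three, eps000, eps001, eps002, eps010, eps011, eps012, eps020, eps021, eps022, eps100, eps101, eps102, eps110, eps111, eps112, eps120, eps121, eps122, eps200, eps201, eps202, eps210, eps211, eps212, eps220, eps221, eps222, hg10, hg20, hg21] at eL1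
  norm_num at eL1
  have eL2 := hLC X Y x hx 2
  simp only [ecross, Fin.sum_univ_three, eps000, eps001, eps002, eps010, eps011, eps012, eps020, eps021, eps022, eps100, eps101, eps102, eps110, eps111, eps112, eps120, eps121, eps122, eps200, eps201, eps202, eps210, eps211, eps212, eps220, eps221, eps222, hg10, hg20, hg21] at eL2
  norm_num at eL2
  have hLow0 : (∑ c, g x (0 : Fin 3) c * lieVF ξ (gcross g X Y) x c)
      = ∑ c, g x (0 : Fin 3) c * (gcross g (lieVF ξ X) Y x c + gcross g X (lieVF ξ Y) x c) := by
    have hA := hLC (lieVF ξ X) Y x hx 0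
    have hB := hLC X (lieVF ξ Y) x hx 0
    simp only [lieVF, ecross, Fin.sum_univ_three, eps000, eps001, eps002, eps010, eps011, eps012, eps020, eps021, eps022, eps100, eps101, eps102, eps110, eps111, eps112, eps120, eps121, eps122, eps200, eps201, eps202, eps210, eps211, eps212, eps220, eps221, eps222, hg10, hg20, hg21, hD10, hD20, hD21] at hA hB
    norm_num at hA hB
    have q0 := hH1 0 0
    rw [hpdE 0 0] at q0
    simp only [lieVF, ecross, Fin.sum_univ_three, eps000, eps001, eps002, eps010, eps011, eps012, eps020, eps021, eps022, eps100, eps101, eps102, eps110, eps111, eps112, eps120, eps121, eps122, eps200, eps201, eps202, eps210, eps211, eps212, eps220, eps221, eps222, hg10, hg20, hg21, hD10, hD20, hD21] at q0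
    norm_num at q0
    have q1 := hH1 1 0
    rw [hpdE 1 0] at q1
    simp only [lieVF, ecross, Fin.sum_univ_three, eps000, eps001, eps002, eps010, eps011, eps012, eps020, eps021, eps022, eps100, eps101, eps102, eps110, eps111, eps112, eps120, eps121, eps122, eps200, eps201, eps202, eps210, eps211, eps212, eps220, eps221, eps222, hg10, hg20, hg21, hD10, hD20, hD21] at q1
    norm_num at q1
    have q2 := hH1 2 0
    rw [hpdE 2 0] at q2
    simp only [lieVF, ecross, Fin.sum_univ_three, eps000, eps001, eps002, eps010, eps011, eps012, eps020, eps021, eps022, eps100, eps101, eps102, eps110, eps111, eps112, eps120, eps121, eps122, eps200, eps201, eps202, eps210, eps211, eps212, eps220, eps221, eps222, hg10, hg20, hg21, hD10, hD20, hD21] at q2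
    norm_num at q2
    have k0 := hK2 0 0
    simp only [Fin.sum_univ_three, hg10, hg20, hg21, hD10, hD20, hD21] at k0
    have k1 := hK2 0 1
    simp only [Fin.sum_univ_three, hg10, hg20, hg21, hD10, hD20, hD21] at k1
    have k2 := hK2 0 2
    simp only [Fin.sum_univ_three, hg10, hg20, hg21, hD10, hD20, hD21] at k2
    simp only [lieVF, ecross, Fin.sum_univ_three, eps000, eps001, eps002, eps010, eps011, eps012, eps020, eps021, eps022, eps100, eps101, eps102, eps110, eps111, eps112, eps120, eps121, eps122, eps200, eps201, eps202, eps210, eps211, eps212, eps220, eps221, eps222, hg10, hg20, hg21, hD10, hD20, hD21]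
    norm_num
    linear_combination ξ x 0 * q0 + ξ x 1 * q1 + ξ x 2 * q2 - gcross g X Y x 0 * k0 - gcross g X Y x 1 * k1 - gcross g X Y x 2 * k2 + (X x 1 * Y x 2 - X x 2 * Y x 1) * hdiv' + pd 0 (fun y => ξ y 0) x * eL0 + pd 0 (fun y => ξ y 1) x * eL1 + pd 0 (fun y => ξ y 2) x * eL2 - hA - hB
  have hLow1 : (∑ c, g x (1 : Fin 3) c * lieVF ξ (gcross g X Y) x c)
      = ∑ c, g x (1 : Fin 3) c * (gcross g (lieVF ξ X) Y x c + gcross g X (lieVF ξ Y) x c) := by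
    have hA := hLC (lieVF ξ X) Y x hx 1
    have hB := hLC X (lieVF ξ Y) x hx 1
    simp only [lieVF, ecross, Fin.sum_univ_three, eps000, eps001, eps002, eps010, eps011, eps012, eps020, eps021, eps022, eps100, eps101, eps102, eps110, eps111, eps112, eps120, eps121, eps122, eps200, eps201, eps202, eps210, eps211, eps212, eps220, eps221, eps222, hg10, hg20, hg21, hD10, hD20, hD21] at hA hB
    norm_num at hA hB
    have q0 := hH1 0 1
    rw [hpdE 0 1] at q0
    simp only [lieVF, ecross, Fin.sum_univ_three, eps000, eps001, eps002, eps010, eps011, eps012, eps020, eps021, eps022, eps100, eps101, eps102, eps110, eps111, eps112, eps120, eps121, eps122, eps200, eps201, eps202, eps210, eps211, eps212, eps220, eps221, eps222, hg10, hg20, hg21, hD10, hD20, hD21] at q0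
    norm_num at q0
    have q1 := hH1 1 1
    rw [hpdE 1 1] at q1
    simp only [lieVF, ecross, Fin.sum_univ_three, eps000, eps001, eps002, eps010, eps011, eps012, eps020, eps021, eps022, eps100, eps101, eps102, eps110, eps111, eps112, eps120, eps121, eps122, eps200, eps201, eps202, eps210, eps211, eps212, eps220, eps221, eps222, hg10, hg20, hg21, hD10, hD20, hD21] at q1
    norm_num at q1
    have q2 := hH1 2 1
    rw [hpdE 2 1] at q2
    simp only [lieVF, ecross, Fin.sum_univ_three, eps000, eps001, eps002, eps010, eps011, eps012, eps020, eps021, eps022, eps100, eps101, eps102, eps110, eps111, eps112, eps120, eps121, eps122, eps200, eps201, eps202, eps210, eps211, eps212, eps220, eps221, eps222, hg10, hg20, hg21, hD10, hD20, hD21] at q2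
    norm_num at q2
    have k0 := hK2 1 0
    simp only [Fin.sum_univ_three, hg10, hg20, hg21, hD10, hD20, hD21] at k0
    have k1 := hK2 1 1
    simp only [Fin.sum_univ_three, hg10, hg20, hg21, hD10, hD20, hD21] at k1
    have k2 := hK2 1 2
    simp only [Fin.sum_univ_three, hg10, hg20, hg21, hD10, hD20, hD21] at k2
    simp only [lieVF, ecross, Fin.sum_univ_three, eps000, eps001, eps002, eps010, eps011, eps012, eps020, eps021, eps022, eps100, eps101, eps102, eps110, eps111, eps112, eps120, eps121, eps122, eps200, eps201, eps202, eps210, eps211, eps212, eps220, eps221, eps222, hg10, hg20, hg21, hD10, hD20, hD21]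
    norm_num
    linear_combination ξ x 0 * q0 + ξ x 1 * q1 + ξ x 2 * q2 - gcross g X Y x 0 * k0 - gcross g X Y x 1 * k1 - gcross g X Y x 2 * k2 + (-X x 0 * Y x 2 + X x 2 * Y x 0) * hdiv' + pd 1 (fun y => ξ y 0) x * eL0 + pd 1 (fun y => ξ y 1) x * eL1 + pd 1 (fun y => ξ y 2) x * eL2 - hA - hB
  have hLow2 : (∑ c, g x (2 : Fin 3) c * lieVF ξ (gcross g X Y) x c)
      = ∑ c, g x (2 : Fin 3) c * (gcross g (lieVF ξ X) Y x c + gcross g X (lieVF ξ Y) x c) := by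
    have hA := hLC (lieVF ξ X) Y x hx 2
    have hB := hLC X (lieVF ξ Y) x hx 2
    simp only [lieVF, ecross, Fin.sum_univ_three, eps000, eps001, eps002, eps010, eps011, eps012, eps020, eps021, eps022, eps100, eps101, eps102, eps110, eps111, eps112, eps120, eps121, eps122, eps200, eps201, eps202, eps210, eps211, eps212, eps220, eps221, eps222, hg10, hg20, hg21, hD10, hD20, hD21] at hA hB
    norm_num at hA hB
    have q0 := hH1 0 2
    rw [hpdE 0 2] at q0
    simp only [lieVF, ecross, Fin.sum_univ_three, eps000, eps001, eps002, eps010, eps011, eps012, eps020, eps021, eps022, eps100, eps101, eps102, eps110, eps111, eps112, eps120, eps121, eps122, eps200, eps201, eps202, eps210, eps211, eps212, eps220, eps221, eps222, hg10, hg20, hg21, hD10, hD20, hD21] at q0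
    norm_num at q0
    have q1 := hH1 1 2
    rw [hpdE 1 2] at q1
    simp only [lieVF, ecross, Fin.sum_univ_three, eps000, eps001, eps002, eps010, eps011, eps012, eps020, eps021, eps022, eps100, eps101, eps102, eps110, eps111, eps112, eps120, eps121, eps122, eps200, eps201, eps202, eps210, eps211, eps212, eps220, eps221, eps222, hg10, hg20, hg21, hD10, hD20, hD21] at q1
    norm_num at q1
    have q2 := hH1 2 2
    rw [hpdE 2 2] at q2
    simp only [lieVF, ecross, Fin.sum_univ_three, eps000, eps001, eps002, eps010, eps011, eps012, eps020, eps021, eps022, eps100, eps101, eps102, eps110, eps111, eps112, eps120, eps121, eps122, eps200, eps201, eps202, eps210, eps211, eps212, eps220, eps221, eps222, hg10, hg20, hg21, hD10, hD20, hD21] at q2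
    norm_num at q2
    have k0 := hK2 2 0
    simp only [Fin.sum_univ_three, hg10, hg20, hg21, hD10, hD20, hD21] at k0
    have k1 := hK2 2 1
    simp only [Fin.sum_univ_three, hg10, hg20, hg21, hD10, hD20, hD21] at k1
    have k2 := hK2 2 2
    simp only [Fin.sum_univ_three, hg10, hg20, hg21, hD10, hD20, hD21] at k2
    simp only [lieVF, ecross, Fin.sum_univ_three, eps000, eps001, eps002, eps010, eps011, eps012, eps020, eps021, eps022, eps100, eps101, eps102, eps110, eps111, eps112, eps120, eps121, eps122, eps200, eps201, eps202, eps210, eps211, eps212, eps220, eps221, eps222, hg10, hg20, hg21, hD10, hD20, hD21]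
    norm_num
    linear_combination ξ x 0 * q0 + ξ x 1 * q1 + ξ x 2 * q2 - gcross g X Y x 0 * k0 - gcross g X Y x 1 * k1 - gcross g X Y x 2 * k2 + (X x 0 * Y x 1 - X x 1 * Y x 0) * hdiv' + pd 2 (fun y => ξ y 0) x * eL0 + pd 2 (fun y => ξ y 1) x * eL1 + pd 2 (fun y => ξ y 2) x * eL2 - hA - hB
  -- invert the metric to conclude
  intro k
  have hueq : (g x).mulVec (fun c => lieVF ξ (gcross g X Y) x c
      - (gcross g (lieVF ξ X) Y x c + gcross g X (lieVF ξ Y) x c)) = 0 := by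
    funext m
    have hlow : (∑ c, g x m c * lieVF ξ (gcross g X Y) x c)
        = ∑ c, g x m c * (gcross g (lieVF ξ X) Y x c + gcross g X (lieVF ξ Y) x c) := by
      fin_cases m
      · exact hLow0
      · exact hLow1
      · exact hLow2
    simp only [Fin.sum_univ_three] at hlow
    simp only [Matrix.mulVec, dotProduct, Fin.sum_univ_three, Pi.zero_apply]
    linear_combination hlow
  have h2 := congrArg (fun v => (g x)⁻¹.mulVec v) hueq
  simp only [Matrix.mulVec_mulVec, Matrix.nonsing_inv_mul _ hunit, Matrix.one_mulVec,
    Matrix.mulVec_zero] at h2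
  have h3 := congrFun h2 k
  simp only [Pi.zero_apply] at h3
  have h4 : lieVF ξ (gcross g X Y) x k
      - (gcross g (lieVF ξ X) Y x k + gcross g X (lieVF ξ Y) x k) = 0 := h3
  linarith [h4]
end
end

section
/- Let g be a Riemannian metric on an open set U ⊆ ℝ³ and let ξ be a smooth vector field on U that is a g-Killing field, i.e. (L_ξ g)_{ij} = 0 on U. Then for every smooth vector field X on U, the Lie derivative along ξ commutes with the g-curl: L_ξ(curl_g X) = curl_g(L_ξ X) on U. -/
noncomputable section

namespace S11

/-! ### pd calculus -/

lemma pd_congr {f h : Pt → ℝ} {x : Pt} (hfh : f =ᶠ[nhds x] h) (i : Fin 3) :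
    pd i f x = pd i h x := by unfold pd; rw [hfh.fderiv_eq]

lemma pd_add {f h : Pt → ℝ} {x : Pt} (hf : DifferentiableAt ℝ f x)
    (hh : DifferentiableAt ℝ h x) (i : Fin 3) :
    pd i (fun y => f y + h y) x = pd i f x + pd i h x := by
  simp [pd, fderiv_fun_add hf hh]

lemma pd_mul {f h : Pt → ℝ} {x : Pt} (hf : DifferentiableAt ℝ f x)
    (hh : DifferentiableAt ℝ h x) (i : Fin 3) :
    pd i (fun y => f y * h y) x = pd i f x * h x + f x * pd i h x := by
  simp [pd, fderiv_fun_mul hf hh]; ring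

lemma pd_sum {ι : Type*} {u : Finset ι} {A : ι → Pt → ℝ} {x : Pt}
    (h : ∀ j ∈ u, DifferentiableAt ℝ (A j) x) (i : Fin 3) :
    pd i (fun y => ∑ j ∈ u, A j y) x = ∑ j ∈ u, pd i (A j) x := by
  simp [pd, fderiv_fun_sum h]

lemma pd_sub {f h : Pt → ℝ} {x : Pt} (hf : DifferentiableAt ℝ f x)
    (hh : DifferentiableAt ℝ h x) (i : Fin 3) :
    pd i (fun y => f y - h y) x = pd i f x - pd i h x := by
  simp [pd, fderiv_fun_sub hf hh]

lemma pd_const_mul {f : Pt → ℝ} {x : Pt} (hf : DifferentiableAt ℝ f x) (c : ℝ) (i : Fin 3) :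
    pd i (fun y => c * f y) x = c * pd i f x := by
  simp [pd, fderiv_const_mul hf c]

lemma pd_inv {f : Pt → ℝ} {x : Pt} (hf : DifferentiableAt ℝ f x) (hne : f x ≠ 0) (i : Fin 3) :
    pd i (fun y => (f y)⁻¹) x = -((f x)^2)⁻¹ * pd i f x := by
  have h1 : HasFDerivAt (fun y => (f y)⁻¹) ((-((f x)^2)⁻¹) • fderiv ℝ f x) x :=
    (hasDerivAt_inv hne).comp_hasFDerivAt x hf.hasFDerivAt
  simp [pd, h1.fderiv]

lemma pd_sqrt {f : Pt → ℝ} {x : Pt} (hf : DifferentiableAt ℝ f x) (hne : f x ≠ 0) (i : Fin 3) :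
    pd i (fun y => Real.sqrt (f y)) x = 1 / (2 * Real.sqrt (f x)) * pd i f x := by
  have h1 : HasFDerivAt (fun y => Real.sqrt (f y))
      ((1 / (2 * Real.sqrt (f x))) • fderiv ℝ f x) x :=
    (Real.hasDerivAt_sqrt hne).comp_hasFDerivAt x hf.hasFDerivAt
  simp [pd, h1.fderiv]

lemma pd_comm {f : Pt → ℝ} {x : Pt} (hf : ContDiffAt ℝ (⊤ : ℕ∞) f x) (i k : Fin 3) :
    pd i (fun y => pd k f y) x = pd k (fun y => pd i f y) x := by
  have hsymm := hf.isSymmSndFDerivAt (by rw [minSmoothness_of_isRCLikeNormedField]; exact WithTop.coe_le_coe.2 le_top)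
  have hdf : DifferentiableAt ℝ (fderiv ℝ f) x :=
    (hf.fderiv_right (m := 1) (WithTop.coe_le_coe.2 le_top)).differentiableAt one_ne_zero
  have h1 : ∀ (a b : Fin 3), pd a (fun y => pd b f y) x
      = fderiv ℝ (fderiv ℝ f) x (Pi.single a 1) (Pi.single b 1) := by
    intro a b
    set L := ContinuousLinearMap.apply ℝ ℝ (Pi.single b (1:ℝ) : Pt) with hL
    have h2 := L.hasFDerivAt.comp x hdf.hasFDerivAt
    have h3 : pd a (fun y => pd b f y) x = fderiv ℝ (⇑L ∘ fderiv ℝ f) x (Pi.single a 1) := rfl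
    rw [h3, h2.fderiv]
    rfl
  rw [h1, h1]
  exact hsymm _ _

lemma contDiffOn_pd {f : Pt → ℝ} {U : Set Pt} (hU : IsOpen U)
    (hf : ContDiffOn ℝ (⊤ : ℕ∞) f U) (i : Fin 3) :
    ContDiffOn ℝ (⊤ : ℕ∞) (fun y => pd i f y) U := by
  have h1 : ContDiffOn ℝ (⊤ : ℕ∞) (fderiv ℝ f) U := hf.fderiv_of_isOpen hU (by simp)
  exact h1.clm_apply contDiffOn_const

/-! ### algebraic identities -/

lemma eps_det (B : Matrix (Fin 3) (Fin 3) ℝ) (D : Fin 3 → Fin 3 → ℝ) (m : Fin 3) :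
    ∑ n, ∑ i, ∑ k, ∑ j, ∑ l, B m n * B i k * B j l * eps k l n * D i j
      = B.det * ∑ i, ∑ j, eps i j m * D i j := by
  fin_cases m <;>
    simp [Fin.sum_univ_three, eps, Matrix.det_fin_three] <;> ring

lemma finalAlg (P Q : Fin 3 → Fin 3 → ℝ) (R S : Fin 3 → Fin 3 → Fin 3 → ℝ)
    (z w : Fin 3 → ℝ) (hS : ∀ i j k, S i j k = S j i k) (m : Fin 3) :
    (∑ k, P k k) * (∑ a, ∑ b, eps a b m * Q a b)
      + (∑ j, z j * ∑ a, ∑ b, eps a b m * R j a b)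
      - (∑ j, (∑ a, ∑ b, eps a b j * Q a b) * P m j)
    = ∑ i, ∑ j, eps i j m *
        ((∑ k, (P k i * Q k j + z k * R k i j)) + ∑ k, (Q i k * P k j + w k * S i j k)) := by
  have e0 : (⟨0, by omega⟩ : Fin 3) = 0 := rfl
  have e1 : (⟨1, by omega⟩ : Fin 3) = 1 := rfl
  have e2 : (⟨2, by omega⟩ : Fin 3) = 2 := rfl
  fin_cases m <;> simp only [e0, e1, e2] <;>
    simp only [Fin.sum_univ_three, eps, Fin.isValue] <;> norm_num <;>
    [ (rw [hS 2 1 0, hS 2 1 1, hS 2 1 2]; ring);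
      (rw [hS 2 0 0, hS 2 0 1, hS 2 0 2]; ring);
      (rw [hS 1 0 0, hS 1 0 1, hS 1 0 2]; ring)]

lemma pd_det {g : Met3} {x : Pt} (hg : ∀ i j, DifferentiableAt ℝ (fun y => g y i j) x)
    (k : Fin 3) :
    pd k (fun y => (g y).det) x
      = ∑ i, ∑ j, (g x).adjugate j i * pd k (fun y => g y i j) x := by
  have hrw : (fun y => (g y).det) = fun y =>
      g y 0 0 * g y 1 1 * g y 2 2 - g y 0 0 * g y 1 2 * g y 2 1
        - g y 0 1 * g y 1 0 * g y 2 2 + g y 0 1 * g y 1 2 * g y 2 0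
        + g y 0 2 * g y 1 0 * g y 2 1 - g y 0 2 * g y 1 1 * g y 2 0 :=
    funext fun y => Matrix.det_fin_three (g y)
  have hm3 : ∀ (a b c d e f : Fin 3), pd k (fun y => g y a b * g y c d * g y e f) x
      = pd k (fun y => g y a b) x * g x c d * g x e f
        + g x a b * pd k (fun y => g y c d) x * g x e f
        + g x a b * g x c d * pd k (fun y => g y e f) x := by
    intro a b c d e f
    rw [pd_mul ((hg a b).fun_mul (hg c d)) (hg e f), pd_mul (hg a b) (hg c d)]
    ring
  have D2 : ∀ (a b c d e f : Fin 3),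
      DifferentiableAt ℝ (fun y => g y a b * g y c d * g y e f) x :=
    fun a b c d e f => ((hg a b).fun_mul (hg c d)).fun_mul (hg e f)
  rw [hrw]
  rw [pd_sub (((((D2 0 0 1 1 2 2).fun_sub (D2 0 0 1 2 2 1)).fun_sub (D2 0 1 1 0 2 2)).fun_add
        (D2 0 1 1 2 2 0)).fun_add (D2 0 2 1 0 2 1)) (D2 0 2 1 1 2 0),
      pd_add ((((D2 0 0 1 1 2 2).fun_sub (D2 0 0 1 2 2 1)).fun_sub (D2 0 1 1 0 2 2)).fun_add
        (D2 0 1 1 2 2 0)) (D2 0 2 1 0 2 1),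
      pd_add (((D2 0 0 1 1 2 2).fun_sub (D2 0 0 1 2 2 1)).fun_sub (D2 0 1 1 0 2 2)) (D2 0 1 1 2 2 0),
      pd_sub ((D2 0 0 1 1 2 2).fun_sub (D2 0 0 1 2 2 1)) (D2 0 1 1 0 2 2),
      pd_sub (D2 0 0 1 1 2 2) (D2 0 0 1 2 2 1),
      hm3, hm3, hm3, hm3, hm3, hm3]
  simp [Matrix.adjugate_fin_three, Fin.sum_univ_three]
  ring

lemma trace_contr (G : Matrix (Fin 3) (Fin 3) ℝ) (hGs : ∀ a b, G a b = G b a)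
    (P Dgz : Fin 3 → Fin 3 → ℝ)
    (hK : ∀ a b, Dgz a b + (∑ l, G b l * P l a) + (∑ l, G a l * P l b) = 0) :
    ∑ a, ∑ b, G.adjugate b a * Dgz a b = -2 * G.det * ∑ k, P k k := by
  have hsub : ∀ a b, Dgz a b = -(∑ l, G b l * P l a) - (∑ l, G a l * P l b) := by
    intro a b; have := hK a b; linarith
  have hG : G = !![G 0 0, G 0 1, G 0 2; G 0 1, G 1 1, G 1 2; G 0 2, G 1 2, G 2 2] := by
    have h := Matrix.eta_fin_three G
    rw [hGs 1 0, hGs 2 0, hGs 2 1] at h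
    exact h
  simp only [Fin.sum_univ_three, hsub]
  rw [hG]
  simp [Matrix.adjugate_fin_three, Matrix.det_fin_three]
  ring

/-! ### metric facts -/

/-- The simplified form of the curl. -/
def cS (g : Met3) (X : VF) (m : Fin 3) : Pt → ℝ :=
  fun x => (sdet g x)⁻¹ * ∑ i, ∑ j, eps i j m * pd i (fun y => ∑ p, g y j p * X y p) x

lemma lemA {g : Met3} {U : Set Pt} (hg : SmoothMetricOn g U) (X : VF) {x : Pt}
    (hx : x ∈ U) (m : Fin 3) : gcurl g X x m = cS g X m x := by
  have hd : 0 < (g x).det := (hg.2 x hx).det_pos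
  have hdB : ((g x)⁻¹).det = ((g x).det)⁻¹ := by
    rw [Matrix.det_nonsing_inv, Ring.inverse_eq_inv]
  have key := eps_det ((g x)⁻¹) (fun a b => pd a (fun y => ∑ p, g y b p * X y p) x) m
  simp only [cS, gcurl]
  rw [key, hdB]
  have hss : Real.sqrt ((g x).det) * Real.sqrt ((g x).det) = (g x).det :=
    Real.mul_self_sqrt hd.le
  have hsne : Real.sqrt ((g x).det) ≠ 0 := (Real.sqrt_pos.2 hd).ne'
  have hsdet : sdet g x = Real.sqrt ((g x).det) := rfl
  rw [hsdet]
  field_simp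
  linear_combination (∑ i, ∑ j, eps i j m * pd i (fun y => ∑ p, g y j p * X y p) x) * hss

lemma Kform {g : Met3} {ξ : VF} {y : Pt}
    (hgd : ∀ a b, DifferentiableAt ℝ (fun z => g z a b) y)
    (hξd : ∀ k, DifferentiableAt ℝ (fun z => ξ z k) y)
    (hpd : (g y).PosDef) (i j : Fin 3) :
    lieMet g ξ y i j = (∑ l, ξ y l * pd l (fun z => g z i j) y)
      + (∑ l, g y j l * pd i (fun z => ξ z l) y)
      + (∑ l, g y i l * pd j (fun z => ξ z l) y) := by
  have hGs : ∀ a b, g y a b = g y b a := by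
    intro a b
    have h := hpd.isHermitian
    have h2 := congrFun (congrFun h.eq a) b
    simpa [Matrix.conjTranspose_apply] using h2.symm
  have hdet : IsUnit (g y).det := (hpd.det_pos.ne').isUnit
  have hGB : ∀ a b, ∑ c, g y a c * (g y)⁻¹ c b = if a = b then 1 else 0 := by
    intro a b
    have h := Matrix.mul_nonsing_inv (g y) hdet
    have h2 := congrFun (congrFun h a) b
    rw [Matrix.mul_apply] at h2
    rw [h2, Matrix.one_apply]
  have hBG2 : ∀ a b, ∑ c, (g y)⁻¹ c a * g y c b = if a = b then 1 else 0 := by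
    intro a b
    calc ∑ c, (g y)⁻¹ c a * g y c b = ∑ c, g y b c * (g y)⁻¹ c a := by
          apply Finset.sum_congr rfl; intro c _; rw [hGs c b]; ring
      _ = if b = a then 1 else 0 := hGB b a
      _ = if a = b then 1 else 0 := by by_cases h : a = b <;> simp [h, Ne.symm]
  have hC : ∀ l, ∑ k, christoffel g y k i j * g y k l
      = (1/2) * (pd i (fun z => g z j l) y + pd j (fun z => g z i l) y
          - pd l (fun z => g z i j) y) := by
    intro l
    have m0 : (⟨0, by omega⟩ : Fin 3) = 0 := rfl
    have m1 : (⟨1, by omega⟩ : Fin 3) = 1 := rfl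
    have m2 : (⟨2, by omega⟩ : Fin 3) = 2 := rfl
    have comb : ∀ ll : Fin 3,
        ((g y)⁻¹ 0 0 * g y 0 ll + (g y)⁻¹ 1 0 * g y 1 ll + (g y)⁻¹ 2 0 * g y 2 ll
            = if (0 : Fin 3) = ll then 1 else 0) →
        ((g y)⁻¹ 0 1 * g y 0 ll + (g y)⁻¹ 1 1 * g y 1 ll + (g y)⁻¹ 2 1 * g y 2 ll
            = if (1 : Fin 3) = ll then 1 else 0) →
        ((g y)⁻¹ 0 2 * g y 0 ll + (g y)⁻¹ 1 2 * g y 1 ll + (g y)⁻¹ 2 2 * g y 2 ll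
            = if (2 : Fin 3) = ll then 1 else 0) →
        ∑ k, christoffel g y k i j * g y k ll
          = (1/2) * (pd i (fun z => g z j ll) y + pd j (fun z => g z i ll) y
              - pd ll (fun z => g z i j) y) := by
      intro ll e0 e1 e2
      simp only [christoffel, Fin.sum_univ_three]
      fin_cases ll <;> simp only [m0, m1, m2] at e0 e1 e2 ⊢ <;> simp at e0 e1 e2 <;>
        linear_combination
          ((1:ℝ)/2) * (pd i (fun z => g z j 0) y + pd j (fun z => g z i 0) y
            - pd 0 (fun z => g z i j) y) * e0
          + ((1:ℝ)/2) * (pd i (fun z => g z j 1) y + pd j (fun z => g z i 1) y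
            - pd 1 (fun z => g z i j) y) * e1
          + ((1:ℝ)/2) * (pd i (fun z => g z j 2) y + pd j (fun z => g z i 2) y
            - pd 2 (fun z => g z i j) y) * e2
    refine comb l ?_ ?_ ?_ <;>
      [ simpa [Fin.sum_univ_three] using hBG2 0 l;
        simpa [Fin.sum_univ_three] using hBG2 1 l;
        simpa [Fin.sum_univ_three] using hBG2 2 l]
  have hΓ : (2:ℝ) * ∑ k, ∑ l, christoffel g y k i j * g y k l * ξ y l
      = ∑ l, (pd i (fun z => g z j l) y + pd j (fun z => g z i l) y
          - pd l (fun z => g z i j) y) * ξ y l := by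
    rw [Finset.sum_comm]
    have h1 : ∀ l, ∑ k, christoffel g y k i j * g y k l * ξ y l
        = ((1/2) * (pd i (fun z => g z j l) y + pd j (fun z => g z i l) y
            - pd l (fun z => g z i j) y)) * ξ y l := by
      intro l
      rw [← hC l, Finset.sum_mul]
    rw [Finset.sum_congr rfl (fun l _ => h1 l), Finset.mul_sum]
    apply Finset.sum_congr rfl; intro l _; ring
  simp only [lieMet]
  rw [pd_sum (fun l _ => ((hgd j l).fun_mul (hξd l))) i,
      pd_sum (fun l _ => ((hgd i l).fun_mul (hξd l))) j, hΓ]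
  have hm : ∀ (a b l : Fin 3), pd a (fun z => g z b l * ξ z l) y
      = pd a (fun z => g z b l) y * ξ y l + g y b l * pd a (fun z => ξ z l) y :=
    fun a b l => pd_mul (hgd b l) (hξd l) a
  simp only [hm, Fin.sum_univ_three]
  ring

lemma etaEq {g : Met3} {ξ X : VF} {y : Pt}
    (hgd : ∀ a b, DifferentiableAt ℝ (fun z => g z a b) y)
    (hξd : ∀ k, DifferentiableAt ℝ (fun z => ξ z k) y)
    (hXd : ∀ p, DifferentiableAt ℝ (fun z => X z p) y)
    (hpd : (g y).PosDef) (hK : ∀ a b, lieMet g ξ y a b = 0) (j : Fin 3) :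
    ∑ p, g y j p * lieVF ξ X y p
      = (∑ k, ξ y k * pd k (fun z => ∑ p, g z j p * X z p) y)
        + ∑ k, (∑ p, g y k p * X y p) * pd j (fun z => ξ z k) y := by
  have hGs : ∀ a b, g y a b = g y b a := by
    intro a b
    have h := hpd.isHermitian
    have h2 := congrFun (congrFun h.eq a) b
    simpa [Matrix.conjTranspose_apply] using h2.symm
  have hK2 : ∀ a b, (∑ l, ξ y l * pd l (fun z => g z a b) y)
      + (∑ l, g y b l * pd a (fun z => ξ z l) y)
      + (∑ l, g y a l * pd b (fun z => ξ z l) y) = 0 := by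
    intro a b
    rw [← Kform hgd hξd hpd a b]
    exact hK a b
  have hω : ∀ (k : Fin 3), pd k (fun z => ∑ p, g z j p * X z p) y
      = ∑ p, (pd k (fun z => g z j p) y * X y p + g y j p * pd k (fun z => X z p) y) := by
    intro k
    rw [pd_sum (fun p _ => (hgd j p).fun_mul (hXd p)) k]
    exact Finset.sum_congr rfl fun p _ => pd_mul (hgd j p) (hXd p) k
  simp only [lieVF]
  simp only [hω]
  simp only [Fin.sum_univ_three]
  have k00 := hK2 j 0; have k01 := hK2 j 1; have k02 := hK2 j 2
  simp only [Fin.sum_univ_three] at k00 k01 k02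
  have s10 := hGs 1 0; have s20 := hGs 2 0; have s21 := hGs 2 1
  linear_combination (-(X y 0)) * k00 - (X y 1) * k01 - (X y 2) * k02
    + (X y 1 * pd j (fun z => ξ z 0) y - X y 0 * pd j (fun z => ξ z 1) y) * s10
    + (X y 2 * pd j (fun z => ξ z 0) y - X y 0 * pd j (fun z => ξ z 2) y) * s20
    + (X y 2 * pd j (fun z => ξ z 1) y - X y 1 * pd j (fun z => ξ z 2) y) * s21

end S11

/-- the Lie derivative along a Killing field commutes with `curl_g`. -/
theorem statement11 (U : Set Pt) (hU : IsOpen U)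
    (g : Met3) (hg : SmoothMetricOn g U)
    (ξ : VF) (hξ : ContDiffOn ℝ (⊤ : ℕ∞) ξ U) (hKill : IsKillingOn g ξ U)
    (X : VF) (hX : ContDiffOn ℝ (⊤ : ℕ∞) X U) :
    ∀ x ∈ U, ∀ i,
      lieVF ξ (gcurl g X) x i = gcurl g (lieVF ξ X) x i := by
  intro x hx m
  obtain ⟨hgs, hgp⟩ := hg
  have hUx : U ∈ nhds x := hU.mem_nhds hx
  have hξc : ∀ k, ContDiffOn ℝ (⊤ : ℕ∞) (fun y => ξ y k) U := fun k =>
    (ContinuousLinearMap.proj (R := ℝ) (φ := fun _ : Fin 3 => ℝ) k).contDiff.comp_contDiffOn hξ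
  have hXc : ∀ p, ContDiffOn ℝ (⊤ : ℕ∞) (fun y => X y p) U := fun p =>
    (ContinuousLinearMap.proj (R := ℝ) (φ := fun _ : Fin 3 => ℝ) p).contDiff.comp_contDiffOn hX
  have hωc : ∀ b, ContDiffOn ℝ (⊤ : ℕ∞) (fun y => ∑ p, g y b p * X y p) U := fun b =>
    ContDiffOn.sum fun p _ => (hgs b p).mul (hXc p)
  have hDωc : ∀ a b, ContDiffOn ℝ (⊤ : ℕ∞) (fun y => pd a (fun z => ∑ p, g z b p * X z p) y) U :=
    fun a b => S11.contDiffOn_pd hU (hωc b) a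
  have hPξc : ∀ b k, ContDiffOn ℝ (⊤ : ℕ∞) (fun y => pd b (fun z => ξ z k) y) U :=
    fun b k => S11.contDiffOn_pd hU (hξc k) b
  have hdetc : ContDiffOn ℝ (⊤ : ℕ∞) (fun y => (g y).det) U := by
    have hrw : (fun y => (g y).det) = fun y =>
        g y 0 0 * g y 1 1 * g y 2 2 - g y 0 0 * g y 1 2 * g y 2 1
          - g y 0 1 * g y 1 0 * g y 2 2 + g y 0 1 * g y 1 2 * g y 2 0
          + g y 0 2 * g y 1 0 * g y 2 1 - g y 0 2 * g y 1 1 * g y 2 0 :=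
      funext fun y => Matrix.det_fin_three (g y)
    rw [hrw]
    exact ((((((hgs 0 0).mul (hgs 1 1)).mul (hgs 2 2)).sub
      (((hgs 0 0).mul (hgs 1 2)).mul (hgs 2 1))).sub
      (((hgs 0 1).mul (hgs 1 0)).mul (hgs 2 2))).add
      (((hgs 0 1).mul (hgs 1 2)).mul (hgs 2 0))).add
      (((hgs 0 2).mul (hgs 1 0)).mul (hgs 2 1)) |>.sub
      (((hgs 0 2).mul (hgs 1 1)).mul (hgs 2 0))
  have dOn : ∀ {f : Pt → ℝ}, ContDiffOn ℝ (⊤ : ℕ∞) f U → ∀ {y : Pt}, y ∈ U → DifferentiableAt ℝ f y :=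
    fun hf _ hy => (hf.contDiffAt (hU.mem_nhds hy)).differentiableAt (by simp)
  have hdpos : ∀ y ∈ U, 0 < (g y).det := fun y hy => (hgp y hy).det_pos
  have hsdAt : ∀ y ∈ U, ContDiffAt ℝ (⊤ : ℕ∞) (sdet g) y := fun y hy =>
    (Real.contDiffAt_sqrt (hdpos y hy).ne').comp y (hdetc.contDiffAt (hU.mem_nhds hy))
  have hsne : ∀ y ∈ U, sdet g y ≠ 0 := fun y hy => (Real.sqrt_pos.2 (hdpos y hy)).ne'
  have hsinvAt : ∀ y ∈ U, ContDiffAt ℝ (⊤ : ℕ∞) (fun z => (sdet g z)⁻¹) y := fun y hy =>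
    (hsdAt y hy).inv (hsne y hy)
  have hgdx : ∀ a b, DifferentiableAt ℝ (fun z => g z a b) x := fun a b => dOn (hgs a b) hx
  have hξdx : ∀ k, DifferentiableAt ℝ (fun z => ξ z k) x := fun k => dOn (hξc k) hx
  have hGs : ∀ a b, g x a b = g x b a := by
    intro a b
    have h2 := congrFun (congrFun (hgp x hx).isHermitian.eq a) b
    simpa [Matrix.conjTranspose_apply] using h2.symm
  have hKx : ∀ a b, ((∑ l, ξ x l * pd l (fun z => g z a b) x)
      + (∑ l, g x b l * pd a (fun z => ξ z l) x))
      + (∑ l, g x a l * pd b (fun z => ξ z l) x) = 0 := fun a b => by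
    rw [← S11.Kform hgdx hξdx (hgp x hx) a b]
    exact hKill x hx a b
  have hjac : ∀ c, pd c (fun y => (g y).det) x
      = ∑ a, ∑ b, (g x).adjugate b a * pd c (fun y => g y a b) x := fun c => S11.pd_det hgdx c
  have htr0 := S11.trace_contr (g x) hGs (fun l a => pd a (fun z => ξ z l) x)
      (fun a b => ∑ l, ξ x l * pd l (fun z => g z a b) x) hKx
  have ftrace : ∑ c, ξ x c * pd c (fun y => (g y).det) x
      = -2 * (g x).det * ∑ k, pd k (fun z => ξ z k) x := by
    simp only [hjac]
    simp only [Fin.sum_univ_three] at htr0 ⊢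
    linear_combination htr0
  have hη : ∀ b : Fin 3, (fun y => ∑ p, g y b p * lieVF ξ X y p) =ᶠ[nhds x]
      (fun y => (∑ k, ξ y k * pd k (fun z => ∑ p, g z b p * X z p) y)
        + ∑ k, (∑ p, g y k p * X y p) * pd b (fun z => ξ z k) y) := fun b =>
    Filter.eventuallyEq_of_mem hUx (fun y hy =>
      S11.etaEq (fun a b => dOn (hgs a b) hy) (fun k => dOn (hξc k) hy)
        (fun p => dOn (hXc p) hy) (hgp y hy) (hKill y hy) b)
  have hgc : ∀ (Y : VF) (n : Fin 3) (y : Pt), y ∈ U → gcurl g Y y n = S11.cS g Y n y :=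
    fun Y n y hy => S11.lemA ⟨hgs, hgp⟩ Y hy n
  have hcur : ∀ n : Fin 3, (fun y => gcurl g X y n) =ᶠ[nhds x] S11.cS g X n :=
    fun n => Filter.eventuallyEq_of_mem hUx (fun y hy => hgc X n y hy)
  -- differentiability of the main pieces at x
  have hsinvd : DifferentiableAt ℝ (fun z => (sdet g z)⁻¹) x :=
    (hsinvAt x hx).differentiableAt (by simp)
  have hFd : DifferentiableAt ℝ
      (fun y => ∑ a, ∑ b, eps a b m * pd a (fun z => ∑ p, g z b p * X z p) y) x :=
    DifferentiableAt.fun_sum fun a _ => DifferentiableAt.fun_sum fun b _ =>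
      ((dOn (hDωc a b) hx).const_mul _)
  -- pd computations
  have hpddet : ∀ c, pd c (sdet g) x
      = 1 / (2 * sdet g x) * pd c (fun y => (g y).det) x := fun c =>
    S11.pd_sqrt (dOn hdetc hx) (hdpos x hx).ne' c
  have hpdsinv : ∀ c, pd c (fun z => (sdet g z)⁻¹) x
      = -((sdet g x)^2)⁻¹ * (1 / (2 * sdet g x) * pd c (fun y => (g y).det) x) := by
    intro c
    have h1 := S11.pd_inv ((hsdAt x hx).differentiableAt (by simp)) (hsne x hx) c
    rw [h1, hpddet c]
  have hcSpd : ∀ c, pd c (S11.cS g X m) x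
      = (-((sdet g x)^2)⁻¹ * (1 / (2 * sdet g x) * pd c (fun y => (g y).det) x))
          * (∑ a, ∑ b, eps a b m * pd a (fun z => ∑ p, g z b p * X z p) x)
        + (sdet g x)⁻¹
          * ∑ a, ∑ b, eps a b m * pd c (fun y => pd a (fun z => ∑ p, g z b p * X z p) y) x := by
    intro c
    have hunf : S11.cS g X m
        = fun y => (fun z => (sdet g z)⁻¹) y
            * (fun z => ∑ a, ∑ b, eps a b m * pd a (fun w => ∑ p, g w b p * X w p) z) y := rfl
    rw [hunf, S11.pd_mul hsinvd hFd c, hpdsinv c]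
    have hpdF : pd c (fun y => ∑ a, ∑ b, eps a b m * pd a (fun z => ∑ p, g z b p * X z p) y) x
        = ∑ a, ∑ b, eps a b m * pd c (fun y => pd a (fun z => ∑ p, g z b p * X z p) y) x := by
      rw [S11.pd_sum (fun a _ => DifferentiableAt.fun_sum fun b _ =>
        ((dOn (hDωc a b) hx).const_mul _)) c]
      refine Finset.sum_congr rfl fun a _ => ?_
      rw [S11.pd_sum (fun b _ => ((dOn (hDωc a b) hx).const_mul _)) c]
      exact Finset.sum_congr rfl fun b _ => S11.pd_const_mul (dOn (hDωc a b) hx) _ c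
    rw [hpdF]
  have hpdη : ∀ a b : Fin 3, pd a (fun y => ∑ p, g y b p * lieVF ξ X y p) x
      = (∑ k, (pd a (fun z => ξ z k) x * pd k (fun z => ∑ p, g z b p * X z p) x
          + ξ x k * pd k (fun y => pd a (fun z => ∑ p, g z b p * X z p) y) x))
        + ∑ k, (pd a (fun z => ∑ p, g z k p * X z p) x * pd b (fun z => ξ z k) x
          + (∑ p, g x k p * X x p) * pd a (fun y => pd b (fun z => ξ z k) y) x) := by
    intro a b
    rw [S11.pd_congr (hη b) a,
      S11.pd_add
        (DifferentiableAt.fun_sum fun k _ => (dOn (hξc k) hx).fun_mul (dOn (hDωc k b) hx))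
        (DifferentiableAt.fun_sum fun k _ => (dOn (hωc k) hx).fun_mul (dOn (hPξc b k) hx)) a]
    congr 1
    · rw [S11.pd_sum (fun k _ => (dOn (hξc k) hx).fun_mul (dOn (hDωc k b) hx)) a]
      refine Finset.sum_congr rfl fun k _ => ?_
      rw [S11.pd_mul (dOn (hξc k) hx) (dOn (hDωc k b) hx) a,
        S11.pd_comm ((hωc b).contDiffAt hUx) a k]
    · rw [S11.pd_sum (fun k _ => (dOn (hωc k) hx).fun_mul (dOn (hPξc b k) hx)) a]
      refine Finset.sum_congr rfl fun k _ => ?_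
      rw [S11.pd_mul (dOn (hωc k) hx) (dOn (hPξc b k) hx) a]
  -- assemble
  have hlie : lieVF ξ (gcurl g X) x m
      = (∑ c, ξ x c * pd c (fun y => gcurl g X y m) x)
        - ∑ c, gcurl g X x c * pd c (fun y => ξ y m) x := rfl
  rw [hlie, hgc (lieVF ξ X) m x hx]
  have e1 : ∀ c : Fin 3, pd c (fun y => gcurl g X y m) x = pd c (S11.cS g X m) x :=
    fun c => S11.pd_congr (hcur m) c
  have e2 : ∀ c : Fin 3, gcurl g X x c = S11.cS g X c x := fun c => hgc X c x hx
  simp only [e1, hcSpd, e2]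
  simp only [S11.cS]
  simp only [hpdη]
  have hSS : ∀ a b k : Fin 3, pd a (fun y => pd b (fun z => ξ z k) y) x
      = pd b (fun y => pd a (fun z => ξ z k) y) x :=
    fun a b k => S11.pd_comm ((hξc k).contDiffAt hUx) a b
  have hFA := S11.finalAlg (fun k c => pd c (fun z => ξ z k) x)
      (fun a b => pd a (fun z => ∑ p, g z b p * X z p) x)
      (fun c a b => pd c (fun y => pd a (fun z => ∑ p, g z b p * X z p) y) x)
      (fun a b k => pd a (fun y => pd b (fun z => ξ z k) y) x)
      (fun k => ξ x k) (fun k => ∑ p, g x k p * X x p)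
      (fun a b k => hSS a b k) m
  have hzc : ∑ c, ξ x c * (-((sdet g x)^2)⁻¹
        * (1 / (2 * sdet g x) * pd c (fun y => (g y).det) x))
      = (sdet g x)⁻¹ * ∑ k, pd k (fun z => ξ z k) x := by
    have hss : sdet g x * sdet g x = (g x).det := Real.mul_self_sqrt (hdpos x hx).le
    have hsn := hsne x hx
    have h2 : ∑ c, ξ x c * (-((sdet g x)^2)⁻¹
          * (1 / (2 * sdet g x) * pd c (fun y => (g y).det) x))
        = -((sdet g x)^2)⁻¹ * (1 / (2 * sdet g x))
          * ∑ c, ξ x c * pd c (fun y => (g y).det) x := by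
      simp only [Fin.sum_univ_three]; ring
    rw [h2, ftrace, ← hss]
    field_simp
  simp only [Fin.sum_univ_three] at hFA hzc ⊢
  linear_combination (sdet g x)⁻¹ * hFA + (eps 0 0 m * pd 0 (fun z => g z 0 0 * X z 0 + g z 0 1 * X z 1 + g z 0 2 * X z 2) x + eps 0 1 m * pd 0 (fun z => g z 1 0 * X z 0 + g z 1 1 * X z 1 + g z 1 2 * X z 2) x + eps 0 2 m * pd 0 (fun z => g z 2 0 * X z 0 + g z 2 1 * X z 1 + g z 2 2 * X z 2) x + eps 1 0 m * pd 1 (fun z => g z 0 0 * X z 0 + g z 0 1 * X z 1 + g z 0 2 * X z 2) x + eps 1 1 m * pd 1 (fun z => g z 1 0 * X z 0 + g z 1 1 * X z 1 + g z 1 2 * X z 2) x + eps 1 2 m * pd 1 (fun z => g z 2 0 * X z 0 + g z 2 1 * X z 1 + g z 2 2 * X z 2) x + eps 2 0 m * pd 2 (fun z => g z 0 0 * X z 0 + g z 0 1 * X z 1 + g z 0 2 * X z 2) x + eps 2 1 m * pd 2 (fun z => g z 1 0 * X z 0 + g z 1 1 * X z 1 + g z 1 2 * X z 2) x + eps 2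 2 m * pd 2 (fun z => g z 2 0 * X z 0 + g z 2 1 * X z 1 + g z 2 2 * X z 2) x) * hzc
end
end

section
/- Let g be a Riemannian metric on an open set U ⊆ ℝ³, let ξ be a smooth vector field on U with |ξ|²_g > 0, let C : ℝ → ℝ be smooth, and let ψ : U → ℝ be smooth with ξ · ∇ψ = 0 on U. Define B_g := |ξ|_g^{-2}(C(ψ) ξ + √|g| (ξ ×_g ∇_g ψ)). Then ξ × B_g = −∇ψ on U, where × and ∇ are the Euclidean cross product and gradient; consequently B_g · ∇ψ = 0 and ξ · ∇ψ = 0, i.e. ψ is a flux function for B_g. -/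
noncomputable section

/-- Cross product of two plain vectors. -/
def cr3 (a b : Fin 3 → ℝ) (k : Fin 3) : ℝ := ∑ i, ∑ j, eps i j k * a i * b j

/-- Matrix times vector, entrywise. -/
def mv3 (M : Matrix (Fin 3) (Fin 3) ℝ) (a : Fin 3 → ℝ) (i : Fin 3) : ℝ := ∑ j, M i j * a j

lemma cr3_smul (a z : Fin 3 → ℝ) (s : ℝ) (k : Fin 3) :
    cr3 a (fun p => s * z p) k = s * cr3 a z k := by
  simp only [cr3, Fin.sum_univ_three]; ring

lemma mv3_smul (M : Matrix (Fin 3) (Fin 3) ℝ) (z : Fin 3 → ℝ) (s : ℝ) (k : Fin 3) :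
    mv3 M (fun p => s * z p) k = s * mv3 M z k := by
  simp only [mv3, Fin.sum_univ_three]; ring

lemma adj_cross (G : Matrix (Fin 3) (Fin 3) ℝ) (hG : ∀ i j, G i j = G j i)
    (a b : Fin 3 → ℝ) (k : Fin 3) :
    mv3 G.adjugate (cr3 a b) k = cr3 (mv3 G a) (mv3 G b) k := by
  fin_cases k <;>
  · simp [mv3, cr3, Fin.sum_univ_three, eps, Matrix.adjugate_fin_three G,
      hG 1 0, hG 2 0, hG 2 1]
    ring

lemma mul_adj (G : Matrix (Fin 3) (Fin 3) ℝ) (a : Fin 3 → ℝ) (k : Fin 3) :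
    mv3 G (mv3 G.adjugate a) k = G.det * a k := by
  fin_cases k <;>
  · simp [mv3, Fin.sum_univ_three, Matrix.adjugate_fin_three G, Matrix.det_fin_three]
    ring

lemma inv_entry (G : Matrix (Fin 3) (Fin 3) ℝ) (a b : Fin 3) :
    G⁻¹ a b = G.det⁻¹ * G.adjugate a b := by
  rw [Matrix.inv_def, Ring.inverse_eq_inv]; simp

lemma mv3_inv (G : Matrix (Fin 3) (Fin 3) ℝ) (z : Fin 3 → ℝ) (k : Fin 3) :
    mv3 G⁻¹ z k = G.det⁻¹ * mv3 G.adjugate z k := by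
  simp only [mv3, Fin.sum_univ_three, inv_entry]; ring

lemma helperX (G : Matrix (Fin 3) (Fin 3) ℝ) (hG : ∀ i j, G i j = G j i)
    (hd : G.det ≠ 0) (v w : Fin 3 → ℝ) (j : Fin 3) :
    G.det * mv3 G⁻¹ (cr3 v (mv3 G⁻¹ w)) j = cr3 (mv3 G v) w j := by
  have h1 : mv3 G⁻¹ w = fun p => G.det⁻¹ * mv3 G.adjugate w p := funext (mv3_inv G w)
  have h2 : mv3 G (mv3 G.adjugate w) = fun p => G.det * w p := funext (mul_adj G w)
  have h3 : cr3 v (fun p => G.det⁻¹ * mv3 G.adjugate w p)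
      = fun k => G.det⁻¹ * cr3 v (mv3 G.adjugate w) k :=
    funext (cr3_smul v _ _)
  have h4 : mv3 G.adjugate (fun k => G.det⁻¹ * cr3 v (mv3 G.adjugate w) k) j
      = G.det⁻¹ * mv3 G.adjugate (cr3 v (mv3 G.adjugate w)) j := mv3_smul _ _ _ _
  rw [h1, mv3_inv, h3, h4, adj_cross G hG, h2, cr3_smul]
  field_simp

/-- `ξ × B_g = −∇ψ`; `ψ` is a flux function for `B_g`. -/
theorem statement12 (U : Set Pt) (hU : IsOpen U)
    (g : Met3) (hg : SmoothMetricOn g U)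
    (ξ : VF) (hξ : ContDiffOn ℝ (⊤ : ℕ∞) ξ U) (hξpos : ∀ x ∈ U, 0 < gnormSq g ξ x)
    (C : ℝ → ℝ) (hC : ContDiff ℝ (⊤ : ℕ∞) C)
    (ψ : Pt → ℝ) (hψ : ContDiffOn ℝ (⊤ : ℕ∞) ψ U)
    (horth : ∀ x ∈ U, edot ξ (egrad ψ) x = 0) :
    ∀ x ∈ U,
      (∀ i, ecross ξ (Bg g ξ C ψ) x i = -egrad ψ x i) ∧
      edot (Bg g ξ C ψ) (egrad ψ) x = 0 ∧
      edot ξ (egrad ψ) x = 0 := by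
  intro x hx
  have hpd := hg.2 x hx
  have hsym : ∀ i j : Fin 3, g x i j = g x j i := by
    intro i j
    have h := congrFun (congrFun hpd.1.symm j) i
    simpa [Matrix.conjTranspose_apply] using h.symm
  have hdet : 0 < (g x).det := hpd.det_pos
  have hs : sdet g x * sdet g x = (g x).det := Real.mul_self_sqrt hdet.le
  have hN : gnormSq g ξ x ≠ 0 := (hξpos x hx).ne'
  have hd0 : (g x).det ≠ 0 := hdet.ne'
  have hvw : ξ x 0 * pd 0 ψ x + ξ x 1 * pd 1 ψ x + ξ x 2 * pd 2 ψ x = 0 := by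
    have := horth x hx
    simpa [edot, egrad, Fin.sum_univ_three] using this
  have hNdef : gnormSq g ξ x =
      g x 0 0 * ξ x 0 * ξ x 0 + g x 1 1 * ξ x 1 * ξ x 1 + g x 2 2 * ξ x 2 * ξ x 2
        + 2 * g x 0 1 * ξ x 0 * ξ x 1 + 2 * g x 0 2 * ξ x 0 * ξ x 2
        + 2 * g x 1 2 * ξ x 1 * ξ x 2 := by
    simp only [gnormSq, gdot, Fin.sum_univ_three, hsym 1 0, hsym 2 0, hsym 2 1]
    ring
  have hB : ∀ j, Bg g ξ C ψ x j = (gnormSq g ξ x)⁻¹ * (C (ψ x) * ξ x j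
      + cr3 (mv3 (g x) (ξ x)) (fun q => pd q ψ x) j) := by
    intro j
    have hshape : (∑ l, ∑ i, ∑ p, (g x)⁻¹ j l * eps i p l * ξ x i *
          (∑ q, (g x)⁻¹ p q * pd q ψ x))
        = mv3 (g x)⁻¹ (cr3 (ξ x) (mv3 (g x)⁻¹ (fun q => pd q ψ x))) j := by
      simp only [mv3, cr3, Fin.sum_univ_three]
      ring
    have hX := helperX (g x) hsym hd0 (ξ x) (fun q => pd q ψ x) j
    simp only [Bg, gcross, ggrad]
    rw [← mul_assoc (sdet g x), hs, hshape, hX]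
  refine ⟨?_, ?_, horth x hx⟩
  · intro k
    fin_cases k
    · simp [ecross, hB, egrad, cr3, mv3, Fin.sum_univ_three, eps, Fin.val_zero,
        Fin.val_one, Fin.val_two, hsym 1 0, hsym 2 0, hsym 2 1]
      field_simp
      linear_combination (g x 0 0 * ξ x 0 + g x 0 1 * ξ x 1 + g x 0 2 * ξ x 2) * hvw + pd 0 ψ x * hNdef
    · simp [ecross, hB, egrad, cr3, mv3, Fin.sum_univ_three, eps, Fin.val_zero,
        Fin.val_one, Fin.val_two, hsym 1 0, hsym 2 0, hsym 2 1]
      field_simp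
      linear_combination (g x 0 1 * ξ x 0 + g x 1 1 * ξ x 1 + g x 1 2 * ξ x 2) * hvw + pd 1 ψ x * hNdef
    · simp [ecross, hB, egrad, cr3, mv3, Fin.sum_univ_three, eps, Fin.val_zero,
        Fin.val_one, Fin.val_two, hsym 1 0, hsym 2 0, hsym 2 1]
      field_simp
      linear_combination (g x 0 2 * ξ x 0 + g x 1 2 * ξ x 1 + g x 2 2 * ξ x 2) * hvw + pd 2 ψ x * hNdef
  · simp [edot, egrad, hB, cr3, mv3, Fin.sum_univ_three, eps, Fin.val_zero,
      Fin.val_one, Fin.val_two, hsym 1 0, hsym 2 0, hsym 2 1]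
    field_simp
    linear_combination C (ψ x) * hvw
end
end
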